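/- arXiv:2110.11876 — 6 statements merged into one kernel-verified Lean document; each statement's English description precedes it below -/
import Mathlib

section
/- There exist absolute constants n₀ and d₀ such that the following holds for all integers n ≥ n₀ and d ≥ d₀. Let r > 0 and let x, x₁, …, xₙ ∈ ℝ^d satisfy ‖xᵢ − x‖₂ ≤ r for all i ∈ [n]. Let Bᵢ denote the closed Euclidean ball of radius r√d centered at xᵢ, and let V_B denote the Lebesgue volume of a ball of radius r√d in ℝ^d. Then the Lebesgue volume of ⋂ᵢ₌₁ⁿ Bᵢ is at least (1/2)·e^{−10√(log n)}·V_B. -/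
/-!
Put `R = r√d` and pick `ρ, M ≥ 0` with `ρ² + 2rM + r² ≤ R²`. Expanding `‖p - xᵢ‖²` around `x` shows
that a point `p` of the ball `B(x, ρ)` lies in `B(xᵢ, R)` unless `⟪p - x, x - xᵢ⟫ > M ‖x - xᵢ‖`,
and that cap of `B(x, ρ)` lies in a ball of radius `√(ρ² - M²)`. Hence
`vol (⋂ B(xᵢ, R)) ≥ (ρ^d - n √(ρ² - M²)^d) · vol B(0, 1)`.

Write `s = √(log n)`. If `d ≥ 2(1 + 4s)`, take `M = 2rs` and `ρ² = r²(d - 1 - 4s)`: then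
`√(ρ² - M²)^d ≤ ρ^d e^{-d M² / 2ρ²} ≤ ρ^d / n²`, so the caps take at most half of `B(x, ρ)`, while
`ρ^d ≥ e^{-(1 + 4s)} R^d`. If `d < 2(1 + 4s)`, the ball `B(x, R - r)` already lies in every
`B(xᵢ, R)`, and `(R - r)^d = R^d (1 - 1/√d)^d ≥ e^{-2√d} R^d ≥ e^{-10s} R^d`.
-/

open MeasureTheory Metric Real
open scoped InnerProductSpace

lemma mul_exp_neg_pow (a u : ℝ) (k : ℕ) : (a * exp (-u)) ^ k = a ^ k * exp (-(k * u)) := by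
  rw [mul_pow, ← exp_nat_mul, mul_neg]

-- `exp (2t) ≥ 1 + 2t` and `(1 + 2t) (1 - t) ≥ 1` on `[0, 1/2]`.
lemma exp_neg_two_mul_le_one_sub {t : ℝ} (h0 : 0 ≤ t) (h1 : t ≤ 1 / 2) :
    exp (-(2 * t)) ≤ 1 - t := by
  rw [exp_neg, inv_le_iff_one_le_mul₀' (exp_pos _)]
  nlinarith [add_one_le_exp (2 * t)]

lemma exp_neg_le_sqrt_one_sub {t : ℝ} (h0 : 0 ≤ t) (h1 : t ≤ 1 / 2) : exp (-t) ≤ √(1 - t) :=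
  le_sqrt_of_sq_le <| by
    rw [← exp_nat_mul]
    convert exp_neg_two_mul_le_one_sub h0 h1 using 2
    push_cast; ring

lemma sqrt_sq_sub_sq_pow_le {ρ : ℝ} (M : ℝ) (hρ : 0 ≤ ρ) (k : ℕ) :
    √(ρ ^ 2 - M ^ 2) ^ k ≤ ρ ^ k * exp (-(k * (M ^ 2 / (2 * ρ ^ 2)))) := by
  have h : √(ρ ^ 2 - M ^ 2) ≤ ρ * exp (-(M ^ 2 / (2 * ρ ^ 2))) := by
    rw [sqrt_le_left (by positivity), mul_pow, ← exp_nat_mul]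
    rcases hρ.eq_or_lt with rfl | hρ
    · simpa using sq_nonneg M
    calc ρ ^ 2 - M ^ 2 = ρ ^ 2 * (1 - M ^ 2 / ρ ^ 2) := by field_simp
      _ ≤ ρ ^ 2 * exp (-(M ^ 2 / ρ ^ 2)) := by gcongr; exact one_sub_le_exp_neg _
      _ = ρ ^ 2 * exp (((2 : ℕ) : ℝ) * -(M ^ 2 / (2 * ρ ^ 2))) := by
          congr 2; push_cast; field_simp
  exact (pow_le_pow_left₀ (sqrt_nonneg _) h k).trans_eq (mul_exp_neg_pow ρ _ k)

lemma natCast_mul_sqrt_sq_sub_sq_pow_le {n k : ℕ} {ρ M : ℝ} (hn : 2 ≤ n) (hρ : 0 < ρ)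
    (h : 4 * ρ ^ 2 * log n ≤ k * M ^ 2) : n * √(ρ ^ 2 - M ^ 2) ^ k ≤ ρ ^ k / 2 := by
  have hn' : (2 : ℝ) ≤ n := by exact_mod_cast hn
  have hexp : exp (-(k * (M ^ 2 / (2 * ρ ^ 2)))) ≤ (n ^ 2 : ℝ)⁻¹ := by
    rw [← exp_log (by positivity : (0 : ℝ) < n ^ 2), ← exp_neg, exp_le_exp, neg_le_neg_iff,
      log_pow, ← mul_div_assoc, le_div_iff₀ (by positivity)]
    push_cast; linarith
  calc n * √(ρ ^ 2 - M ^ 2) ^ k ≤ n * (ρ ^ k * (n ^ 2 : ℝ)⁻¹) := by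
        gcongr
        exact (sqrt_sq_sub_sq_pow_le M hρ.le k).trans (by gcongr)
    _ = ρ ^ k / n := by field_simp
    _ ≤ ρ ^ k / 2 := by gcongr

section Geometry

variable {E : Type*} [NormedAddCommGroup E] [InnerProductSpace ℝ E]

lemma mem_closedBall_of_inner_le {x y p : E} {r ρ M R : ℝ} (hy : ‖y - x‖ ≤ r) (hM : 0 ≤ M)
    (hR : 0 ≤ R) (hρMR : ρ ^ 2 + 2 * r * M + r ^ 2 ≤ R ^ 2) (hp : p ∈ closedBall x ρ)
    (hinner : ⟪p - x, x - y⟫_ℝ ≤ M * ‖x - y‖) : p ∈ closedBall y R := by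
  rw [mem_closedBall, dist_eq_norm] at hp ⊢
  rw [norm_sub_rev] at hy
  have hpx : ‖p - x‖ ^ 2 ≤ ρ ^ 2 := pow_le_pow_left₀ (norm_nonneg _) hp 2
  have hxy : ‖x - y‖ ^ 2 ≤ r ^ 2 := pow_le_pow_left₀ (norm_nonneg _) hy 2
  have hexpand : ‖p - y‖ ^ 2 = ‖p - x‖ ^ 2 + 2 * ⟪p - x, x - y⟫_ℝ + ‖x - y‖ ^ 2 := by
    rw [← norm_add_sq_real, sub_add_sub_cancel]
  refine (pow_le_pow_iff_left₀ (norm_nonneg _) hR two_ne_zero).1 ?_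
  nlinarith [mul_le_mul_of_nonneg_left hy hM]

lemma inter_setOf_lt_inner_subset_closedBall {x y : E} {ρ M : ℝ} (hM : 0 ≤ M) :
    closedBall x ρ ∩ {p | M * ‖x - y‖ < ⟪p - x, x - y⟫_ℝ} ⊆
      closedBall (x + (M / ‖x - y‖) • (x - y)) √(ρ ^ 2 - M ^ 2) := by
  rintro p ⟨hp, hcap : M * ‖x - y‖ < ⟪p - x, x - y⟫_ℝ⟩
  set v := x - y
  have hv : 0 < ‖v‖ := norm_pos_iff.2 fun h => by simp [h] at hcap
  rw [mem_closedBall, dist_eq_norm] at hp ⊢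
  have hpx : ‖p - x‖ ^ 2 ≤ ρ ^ 2 := pow_le_pow_left₀ (norm_nonneg _) hp 2
  have hexpand : ‖p - (x + (M / ‖v‖) • v)‖ ^ 2
      = ‖p - x‖ ^ 2 - 2 * ((M / ‖v‖) * ⟪p - x, v⟫_ℝ) + M ^ 2 := by
    rw [← sub_sub, norm_sub_sq_real, real_inner_smul_right, norm_smul, Real.norm_eq_abs,
      abs_of_nonneg (by positivity), div_mul_cancel₀ _ hv.ne']
  have hproj : M ^ 2 ≤ (M / ‖v‖) * ⟪p - x, v⟫_ℝ := by
    calc M ^ 2 = (M / ‖v‖) * (M * ‖v‖) := by field_simp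
      _ ≤ (M / ‖v‖) * ⟪p - x, v⟫_ℝ := by gcongr
  exact le_sqrt_of_sq_le (by linarith)

variable [FiniteDimensional ℝ E] [MeasurableSpace E] [BorelSpace E]

theorem ofReal_sub_mul_le_measure_iInter_closedBall (μ : Measure E) [μ.IsAddHaarMeasure]
    {ι : Type*} [Fintype ι] {x : E} {y : ι → E} {r ρ M R : ℝ} (hy : ∀ i, ‖y i - x‖ ≤ r)
    (hρ : 0 ≤ ρ) (hM : 0 ≤ M) (hR : 0 ≤ R) (hρMR : ρ ^ 2 + 2 * r * M + r ^ 2 ≤ R ^ 2) :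
    ENNReal.ofReal (ρ ^ Module.finrank ℝ E
        - Fintype.card ι * √(ρ ^ 2 - M ^ 2) ^ Module.finrank ℝ E) * μ (ball 0 1) ≤
      μ (⋂ i, closedBall (y i) R) := by
  set k := Module.finrank ℝ E
  set σ := √(ρ ^ 2 - M ^ 2)
  have hσ : 0 ≤ σ := sqrt_nonneg _
  set cap : ι → Set E := fun i => closedBall x ρ ∩ {p | M * ‖x - y i‖ < ⟪p - x, x - y i⟫_ℝ}
  have hcover : closedBall x ρ ⊆ (⋂ i, closedBall (y i) R) ∪ ⋃ i, cap i := by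
    intro p hp
    by_cases hcap : ∃ i, p ∈ cap i
    · exact Or.inr (Set.mem_iUnion.2 hcap)
    · exact Or.inl <| Set.mem_iInter.2 fun i => mem_closedBall_of_inner_le (hy i) hM hR hρMR hp
        (not_lt.1 fun h => hcap ⟨i, hp, h⟩)
  have hcaps : μ (⋃ i, cap i) ≤ ENNReal.ofReal (Fintype.card ι * σ ^ k) * μ (ball 0 1) := by
    calc μ (⋃ i, cap i) ≤ ∑ i, μ (cap i) := measure_iUnion_fintype_le _ _
      _ ≤ ∑ i, μ (closedBall (x + (M / ‖x - y i‖) • (x - y i)) σ) :=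
          Finset.sum_le_sum fun i _ => measure_mono (inter_setOf_lt_inner_subset_closedBall hM)
      _ = ENNReal.ofReal (Fintype.card ι * σ ^ k) * μ (ball 0 1) := by
          rw [Finset.sum_congr rfl fun i _ => Measure.addHaar_closedBall μ _ hσ,
            Finset.sum_const, Finset.card_univ, nsmul_eq_mul]
          rw [ENNReal.ofReal_mul (by positivity), ENNReal.ofReal_natCast, mul_assoc]
  calc ENNReal.ofReal (ρ ^ k - Fintype.card ι * σ ^ k) * μ (ball 0 1)
      = μ (closedBall x ρ) - ENNReal.ofReal (Fintype.card ι * σ ^ k) * μ (ball 0 1) := by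
        rw [ENNReal.ofReal_sub _ (by positivity), ENNReal.sub_mul fun _ _ => measure_ball_lt_top.ne,
          Measure.addHaar_closedBall _ _ hρ]
    _ ≤ μ (closedBall x ρ) - μ (⋃ i, cap i) := tsub_le_tsub_left hcaps _
    _ ≤ μ (⋂ i, closedBall (y i) R) := by
        rw [tsub_le_iff_right]
        exact (measure_mono hcover).trans (measure_union_le _ _)

end Geometry

-- `ρ` is the radius of the ball about the common centre and `M` the height of the caps; by
-- `ofReal_sub_mul_le_measure_iInter_closedBall` these conditions give
-- `vol (⋂ B(xᵢ, R)) ≥ c · vol B(0, R)`.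
def AdmissibleRadii (n d : ℕ) (c r R ρ M : ℝ) : Prop :=
  0 ≤ ρ ∧ 0 ≤ M ∧ ρ ^ 2 + 2 * r * M + r ^ 2 ≤ R ^ 2 ∧
    c * R ^ d ≤ ρ ^ d - n * √(ρ ^ 2 - M ^ 2) ^ d

lemma exists_admissibleRadii_of_le {n d : ℕ} {r s : ℝ} (hn : 2 ≤ n) (hr : 0 < r)
    (hs : 1 / 6 ≤ s) (hlog : s ^ 2 = log n) (hd : 2 * (1 + 4 * s) ≤ d) :
    ∃ ρ M, AdmissibleRadii n d (1 / 2 * exp (-10 * s)) r (r * √d) ρ M := by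
  set R := r * √d
  set t := (1 + 4 * s) / d
  have hd0 : (0 : ℝ) < d := by linarith
  have hdt : d * t = 1 + 4 * s := mul_div_cancel₀ _ hd0.ne'
  have ht0 : 0 ≤ t := by positivity
  have ht : t ≤ 1 / 2 := by rw [div_le_iff₀ hd0]; linarith
  have hR2 : R ^ 2 = r ^ 2 * d := by rw [mul_pow, sq_sqrt hd0.le]
  have hρ2 : (R * √(1 - t)) ^ 2 = r ^ 2 * d - r ^ 2 * (1 + 4 * s) := by
    rw [mul_pow, sq_sqrt (by linarith), hR2]
    linear_combination (-r ^ 2) * hdt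
  have hρ : 0 < R * √(1 - t) := by
    have : 0 < 1 - t := by linarith
    positivity
  refine ⟨R * √(1 - t), 2 * r * s, hρ.le, by positivity, by nlinarith, ?_⟩
  have hcaps := natCast_mul_sqrt_sq_sub_sq_pow_le (k := d) (M := 2 * r * s) hn hρ (by
    rw [hρ2, ← hlog]; nlinarith [sq_nonneg s])
  have hball : R ^ d * exp (-10 * s) ≤ (R * √(1 - t)) ^ d :=
    calc R ^ d * exp (-10 * s) ≤ R ^ d * exp (-(d * t)) := by gcongr; linarith
      _ = (R * exp (-t)) ^ d := (mul_exp_neg_pow R t d).symm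
      _ ≤ (R * √(1 - t)) ^ d := by gcongr; exact exp_neg_le_sqrt_one_sub ht0 ht
  linarith

lemma exists_admissibleRadii_of_lt {n d : ℕ} {r s : ℝ} (hr : 0 < r) (hs : 1 / 2 ≤ s)
    (hd4 : 4 ≤ d) (hd : d < 2 * (1 + 4 * s)) :
    ∃ ρ M, AdmissibleRadii n d (1 / 2 * exp (-10 * s)) r (r * √d) ρ M := by
  set R := r * √d with hR
  have hd4' : (4 : ℝ) ≤ d := by exact_mod_cast hd4
  have hsqrt : 2 ≤ √d := le_sqrt_of_sq_le (by linarith)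
  have hdsqrt : (d : ℝ) * (1 / √d) = √d := by
    rw [mul_one_div, div_sqrt]
  have hRr : R - r = R * (1 - 1 / √d) := by rw [hR]; field_simp
  have hRr0 : 0 ≤ R - r := by rw [hR]; nlinarith
  -- with `M = ρ` every cap is empty
  refine ⟨R - r, R - r, hRr0, hRr0, by nlinarith, ?_⟩
  rw [sub_self, sqrt_zero, zero_pow (by positivity), mul_zero, sub_zero]
  have hsqrt_le : √d ≤ 5 * s := by rw [sqrt_le_left (by linarith)]; nlinarith
  have hexp : exp (-10 * s) ≤ exp (-(d * (2 * (1 / √d)))) := by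
    rw [exp_le_exp, mul_left_comm, hdsqrt]; linarith
  calc 1 / 2 * exp (-10 * s) * R ^ d ≤ R ^ d * exp (-(d * (2 * (1 / √d)))) := by
        nlinarith [exp_pos (-10 * s), pow_nonneg (by positivity : 0 ≤ R) d]
    _ = (R * exp (-(2 * (1 / √d)))) ^ d := (mul_exp_neg_pow R _ d).symm
    _ ≤ (R * (1 - 1 / √d)) ^ d := by
        gcongr
        exact exp_neg_two_mul_le_one_sub (by positivity) (one_div_le_one_div_of_le two_pos hsqrt)
    _ = (R - r) ^ d := by rw [hRr]

/-- Lemma (volume of intersection of balls): if `x₁, …, xₙ` are all within distance `r`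
of `x`, then the intersection of the closed balls of radius `r√d` around the `xᵢ` has
Lebesgue volume at least `(1/2)·e^{−10√(log n)}` times the volume of one such ball. -/
theorem stmt_0 :
    ∃ n₀ d₀ : ℕ, ∀ (n d : ℕ), n₀ ≤ n → d₀ ≤ d →
      ∀ r : ℝ, 0 < r →
      ∀ (x : EuclideanSpace ℝ (Fin d)) (xs : Fin n → EuclideanSpace ℝ (Fin d)),
        (∀ i, ‖xs i - x‖ ≤ r) →
        ENNReal.ofReal ((1 / 2) * Real.exp (-10 * Real.sqrt (Real.log n))) *
            volume (closedBall (0 : EuclideanSpace ℝ (Fin d)) (r * Real.sqrt d)) ≤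
          volume (⋂ i, closedBall (xs i) (r * Real.sqrt d)) := by
  refine ⟨2, 4, fun n d hn hd r hr x xs hxs => ?_⟩
  set s := √(log n)
  have hn' : (2 : ℝ) ≤ n := by exact_mod_cast hn
  have hlog : s ^ 2 = log n := sq_sqrt (log_nonneg (by linarith))
  have hs : 1 / 2 ≤ s :=
    le_sqrt_of_sq_le (by linarith [log_two_gt_d9, log_le_log two_pos hn'])
  obtain ⟨ρ, M, hρ, hM, hρMR, hvol⟩ :
      ∃ ρ M, AdmissibleRadii n d (1 / 2 * exp (-10 * s)) r (r * √d) ρ M := by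
    rcases le_or_gt (2 * (1 + 4 * s)) d with hsd | hds
    · exact exists_admissibleRadii_of_le hn hr (by linarith) hlog hsd
    · exact exists_admissibleRadii_of_lt hr hs hd hds
  have hinter := ofReal_sub_mul_le_measure_iInter_closedBall volume hxs hρ hM (by positivity) hρMR
  rw [finrank_euclideanSpace_fin, Fintype.card_fin] at hinter
  rw [Measure.addHaar_closedBall _ _ (by positivity), finrank_euclideanSpace_fin, ← mul_assoc,
    ← ENNReal.ofReal_mul (by positivity)]
  exact le_trans (by gcongr) hinter
end

section
/- There exists an absolute constant N₀ such that for all real N ≥ N₀ the following holds. Suppose 0 ≤ q, q' ≤ 1/2 and 0 < ε, δ < 1/3 satisfy e^{−ε}·q − δ/N ≤ q' ≤ e^{ε}·q + δ/N. Then: (i) e^{−ε}·(N·q)/((N−1)·q + 1) − δ ≤ (N·q')/((N−1)·q' + 1) ≤ e^{ε}·(N·q)/((N−1)·q + 1) + δ; and (ii) e^{−3ε}·(1−q)/((N−1)·q + 1) − 2δ ≤ (1−q')/((N−1)·q' + 1) ≤ e^{2ε}·(1−q)/((N−1)·q + 1) + 3δ. -/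
private lemma hmono (N a b : ℝ) (hN : 1 ≤ N) (ha : 0 ≤ a) (hab : a ≤ b) :
    N*a/((N-1)*a+1) ≤ N*b/((N-1)*b+1) := by
  have hb : 0 ≤ b := ha.trans hab
  have hda : 0 < (N-1)*a+1 := by nlinarith
  have hdb : 0 < (N-1)*b+1 := by nlinarith
  rw [div_le_div_iff₀ hda hdb]
  nlinarith

private lemma hsub (N a b : ℝ) (hN : 1 ≤ N) (ha : 0 ≤ a) (hb : 0 ≤ b) :
    N*(a+b)/((N-1)*(a+b)+1) ≤ N*a/((N-1)*a+1) + N*b/((N-1)*b+1) := by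
  have hda : 0 < (N-1)*a+1 := by nlinarith
  have hdb : 0 < (N-1)*b+1 := by nlinarith
  have hdab : 0 < (N-1)*(a+b)+1 := by nlinarith
  rw [div_add_div _ _ hda.ne' hdb.ne', div_le_div_iff₀ hdab (by positivity)]
  nlinarith [mul_nonneg (mul_nonneg (mul_nonneg (by linarith : (0:ℝ) ≤ N) (by linarith : (0:ℝ) ≤ N-1)) ha) hb,
    mul_nonneg (mul_nonneg (mul_nonneg (mul_nonneg (by linarith : (0:ℝ) ≤ N) (by linarith : (0:ℝ) ≤ N-1)) ha) hb) (by linarith : (0:ℝ) ≤ a+b)]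

private lemma hscale_up (N c x : ℝ) (hN : 1 ≤ N) (hc : 1 ≤ c) (hx : 0 ≤ x) :
    N*(c*x)/((N-1)*(c*x)+1) ≤ c*(N*x/((N-1)*x+1)) := by
  have hdx : 0 < (N-1)*x+1 := by nlinarith
  have hdcx : 0 < (N-1)*(c*x)+1 := by nlinarith [mul_nonneg (by linarith : (0:ℝ) ≤ c) hx]
  rw [mul_div_assoc' c (N*x) _, div_le_div_iff₀ hdcx hdx]
  nlinarith [mul_nonneg (mul_nonneg (mul_nonneg (by linarith : (0:ℝ) ≤ c) (by linarith : (0:ℝ) ≤ N)) hx) (mul_nonneg (by linarith : (0:ℝ) ≤ N-1) (mul_nonneg hx (by linarith : (0:ℝ) ≤ c - 1)))]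

private lemma hscale_down (N c x : ℝ) (hN : 1 ≤ N) (hc0 : 0 < c) (hc : c ≤ 1) (hx : 0 ≤ x) :
    c*(N*x/((N-1)*x+1)) ≤ N*(c*x)/((N-1)*(c*x)+1) := by
  have hdx : 0 < (N-1)*x+1 := by nlinarith
  have hdcx : 0 < (N-1)*(c*x)+1 := by nlinarith
  rw [mul_div_assoc' c (N*x) _, div_le_div_iff₀ hdx hdcx]
  nlinarith [mul_nonneg (mul_nonneg (mul_nonneg hc0.le (by linarith : (0:ℝ) ≤ N)) hx) (mul_nonneg (by linarith : (0:ℝ) ≤ N-1) (mul_nonneg hx (by linarith : (0:ℝ) ≤ 1 - c)))]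

private lemma hsmall (N x : ℝ) (hN : 1 ≤ N) (hx : 0 ≤ x) :
    N*x/((N-1)*x+1) ≤ N*x := by
  apply div_le_self (by positivity)
  nlinarith

private lemma aux_div (a b c d s : ℝ) (hb : 0 < b) (hd : 0 < d) (h : a*d ≤ c*b + s*b*d) :
    a/b ≤ c/d + s := by
  rw [div_add' _ _ _ hd.ne', div_le_div_iff₀ hb hd]
  nlinarith

private lemma expE14 (ε : ℝ) (hε3 : ε ≤ 1/3) : Real.exp ε ≤ 1.4 := by
  have key : Real.exp (1/3 : ℝ) * Real.exp (1/3 : ℝ) * Real.exp (1/3 : ℝ) = Real.exp 1 := by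
    rw [← Real.exp_add, ← Real.exp_add]; norm_num
  have h1 : Real.exp (1/3 : ℝ) ≤ 1.4 := by
    nlinarith [Real.exp_one_lt_d9, Real.exp_pos (1/3 : ℝ), sq_nonneg (Real.exp (1/3 : ℝ) - 1.4),
      sq_nonneg (Real.exp (1/3 : ℝ) + 1.4)]
  have h2 : Real.exp ε ≤ Real.exp (1/3 : ℝ) := Real.exp_le_exp.mpr hε3
  linarith

private lemma efacts (E F : ℝ) (hE0 : 0 < E) (hF0 : 0 < F) (hEF : E * F = 1)
    (hE1 : 1 ≤ E) (hE14 : E ≤ 1.4) :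
    F ≤ 1 ∧ 2 ≤ E + F ∧ E + F*F ≤ 2 := by
  have hFeq : F = 1/E := eq_one_div_of_mul_eq_one_left (by linarith [mul_comm E F] : F * E = 1)
  subst hFeq
  refine ⟨by rw [div_le_one hE0]; linarith, by nlinarith [sq_nonneg (E-1)], ?_⟩
  rw [← sub_nonneg, show 2 - (E + 1/E*(1/E)) = (2*(E*E) - E*E*E - 1)/(E*E) from by field_simp; ring]
  apply div_nonneg _ (by positivity)
  nlinarith [mul_nonneg (by linarith : (0:ℝ) ≤ E - 1) (by nlinarith : (0:ℝ) ≤ 1 + E - E*E)]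

set_option maxHeartbeats 1000000 in
private lemma part2 (N q q' d δ E F : ℝ) (hN1 : 1 ≤ N)
    (hq0 : 0 ≤ q) (hq2 : q ≤ 1/2) (hq'0 : 0 ≤ q') (hq'2 : q' ≤ 1/2)
    (hδ0 : 0 < δ) (hδ3 : δ < 1/3)
    (hd0 : 0 ≤ d) (hdδ : d ≤ δ) (hd1N : (N-1)*d ≤ δ)
    (hE0 : 0 < E) (hF0 : 0 < F) (hEF : E * F = 1) (hE1 : 1 ≤ E) (hE14 : E ≤ 1.4)
    (hF1 : F ≤ 1) (hEpF : 2 ≤ E + F) (hEF2 : E + F*F ≤ 2)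
    (hlow : F * q - d ≤ q') (hup : q' ≤ E * q + d) :
    F*F*F * (1 - q) / ((N - 1) * q + 1) - 2*δ ≤ (1 - q') / ((N - 1) * q' + 1) ∧
    (1 - q') / ((N - 1) * q' + 1) ≤ E*E * (1 - q) / ((N - 1) * q + 1) + 3 * δ := by
  have hN0 : (0:ℝ) < N := by linarith
  have hkq : (0:ℝ) ≤ (N-1)*q := mul_nonneg (by linarith) hq0
  have hkq' : (0:ℝ) ≤ (N-1)*q' := mul_nonneg (by linarith) hq'0
  have hD0 : (0:ℝ) < (N-1)*q+1 := by linarith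
  have hD'0 : (0:ℝ) < (N-1)*q'+1 := by linarith
  have hD1 : (1:ℝ) ≤ (N-1)*q+1 := by linarith
  have hD'1 : (1:ℝ) ≤ (N-1)*q'+1 := by linarith
  have h1q : (0:ℝ) ≤ 1 - q := by linarith
  have hFF : F*F ≤ 1 := mul_le_one₀ hF1 hF0.le hF1
  have hFFF : F*F*F ≤ 1 := mul_le_one₀ hFF hF0.le hF1
  have hF3q0 : 0 ≤ F*F*F*(1-q) :=
    mul_nonneg (mul_nonneg (mul_nonneg hF0.le hF0.le) hF0.le) h1q
  have hF3q1 : F*F*F*(1-q) ≤ 1 := mul_le_one₀ hFFF h1q (by linarith)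
  have hE2 : E*E ≤ 2 := by
    have h := mul_le_mul hE14 hE14 hE0.le (by norm_num : (0:ℝ) ≤ 1.4)
    norm_num at h; linarith
  -- numerator facts
  have fa : 1 - q' ≤ E*(1-q) + d := by
    have key : 0 ≤ (1/2 - q)*(E - F) :=
      mul_nonneg (by linarith) (by linarith)
    linarith [key]
  have fc : F*F*(1-q) - d ≤ 1 - q' := by
    have key : 0 ≤ (1/2 - q)*(E - F*F) :=
      mul_nonneg (by linarith) (by linarith)
    linarith [key]
  -- denominator facts
  have fb : (N-1)*q+1 ≤ E*((N-1)*q'+1) + E*δ := by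
    have h1 : 0 ≤ E*(N-1)*(q' - (F*q - d)) :=
      mul_nonneg (mul_nonneg hE0.le (by linarith)) (by linarith)
    have h2 : E*(N-1)*(F*q) = (N-1)*q := by
      linear_combination ((N-1)*q) * hEF
    have h3 : E*((N-1)*d) ≤ E*δ := mul_le_mul_of_nonneg_left hd1N hE0.le
    linarith [h1, h2, h3]
  have fd : (N-1)*q'+1 ≤ E*((N-1)*q+1) + δ := by
    have h1 : (N-1)*q' ≤ (N-1)*(E*q+d) :=
      mul_le_mul_of_nonneg_left hup (by linarith)
    have h2 : (N-1)*d ≤ δ := hd1N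
    linarith [h1, h2, mul_nonneg (mul_nonneg (by linarith : (0:ℝ) ≤ N-1) hq0) (by linarith : (0:ℝ) ≤ E - 1)]
  have hDD : (1:ℝ) ≤ ((N-1)*q+1)*((N-1)*q'+1) := by
    linarith [mul_nonneg hkq hkq']
  have h5 : d*((N-1)*q+1) ≤ δ*(((N-1)*q+1)*((N-1)*q'+1)) := by
    have h5a : d*((N-1)*q+1) ≤ δ*((N-1)*q+1) :=
      mul_le_mul_of_nonneg_right hdδ hD0.le
    have h5b : (δ*((N-1)*q+1))*1 ≤ (δ*((N-1)*q+1))*((N-1)*q'+1) :=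
      mul_le_mul_of_nonneg_left hD'1 (mul_nonneg hδ0.le hD0.le)
    linarith [h5a, h5b]
  have h6 : δ ≤ δ*(((N-1)*q+1)*((N-1)*q'+1)) := by
    have := mul_le_mul_of_nonneg_left hDD hδ0.le
    linarith
  constructor
  · rw [sub_le_iff_le_add]
    apply aux_div _ _ _ _ _ hD0 hD'0
    have h1 : F*F*F*(1-q)*((N-1)*q'+1) ≤ F*F*F*(1-q)*(E*((N-1)*q+1) + δ) :=
      mul_le_mul_of_nonneg_left fd hF3q0
    have h2 : F*F*F*(1-q)*(E*((N-1)*q+1)) = F*F*(1-q)*((N-1)*q+1) := by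
      linear_combination (F*F*(1-q)*((N-1)*q+1)) * hEF
    have h3 : (F*F*(1-q) - d)*((N-1)*q+1) ≤ (1-q')*((N-1)*q+1) :=
      mul_le_mul_of_nonneg_right fc hD0.le
    have h4 : F*F*F*(1-q)*δ ≤ δ := by
      have h := mul_le_mul_of_nonneg_right hF3q1 hδ0.le
      linarith
    linarith [h1, h2, h3, h4, h5, h6]
  · apply aux_div _ _ _ _ _ hD'0 hD0
    have h1 : (1-q')*((N-1)*q+1) ≤ (E*(1-q) + d)*((N-1)*q+1) :=
      mul_le_mul_of_nonneg_right fa hD0.le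
    have h2 : E*(1-q)*((N-1)*q+1) ≤ E*(1-q)*(E*((N-1)*q'+1) + E*δ) :=
      mul_le_mul_of_nonneg_left fb (mul_nonneg hE0.le h1q)
    have h4 : E*(1-q)*(E*δ) ≤ 2*δ := by
      have ha : E*(1-q) ≤ E := by linarith [mul_nonneg hE0.le hq0]
      have hb : E*(1-q)*(E*δ) ≤ E*(E*δ) :=
        mul_le_mul_of_nonneg_right ha (mul_nonneg hE0.le hδ0.le)
      have hc : E*(E*δ) ≤ 2*δ := by
        have := mul_le_mul_of_nonneg_right hE2 hδ0.le
        linarith [this]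
      linarith
    have h6' : 2*δ ≤ 2*δ*(((N-1)*q+1)*((N-1)*q'+1)) := by linarith [h6]
    linarith [h1, h2, h4, h5, h6']

set_option maxHeartbeats 1000000 in
/-- For all sufficiently large `N`: if `0 ≤ q, q' ≤ 1/2` and `0 < ε, δ < 1/3` satisfy
`e^{−ε}·q − δ/N ≤ q' ≤ e^{ε}·q + δ/N`, then the two pairs of inequalities about
`N·q'/((N−1)q'+1)` and `(1−q')/((N−1)q'+1)` hold. -/
theorem stmt_4 :
    ∃ N₀ : ℝ, ∀ N : ℝ, N₀ ≤ N →
      ∀ q q' ε δ : ℝ, 0 ≤ q → q ≤ 1/2 → 0 ≤ q' → q' ≤ 1/2 →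
        0 < ε → ε < 1/3 → 0 < δ → δ < 1/3 →
        Real.exp (-ε) * q - δ / N ≤ q' → q' ≤ Real.exp ε * q + δ / N →
        (Real.exp (-ε) * (N * q) / ((N - 1) * q + 1) - δ ≤ N * q' / ((N - 1) * q' + 1) ∧
          N * q' / ((N - 1) * q' + 1) ≤ Real.exp ε * (N * q) / ((N - 1) * q + 1) + δ) ∧
        (Real.exp (-(3 * ε)) * (1 - q) / ((N - 1) * q + 1) - 2 * δ ≤
            (1 - q') / ((N - 1) * q' + 1) ∧
          (1 - q') / ((N - 1) * q' + 1) ≤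
            Real.exp (2 * ε) * (1 - q) / ((N - 1) * q + 1) + 3 * δ) := by
  refine ⟨1, fun N hN1 q q' ε δ hq0 hq2 hq'0 hq'2 hε0 hε3 hδ0 hδ3 hlow hup => ?_⟩
  have hN0 : (0:ℝ) < N := by linarith
  have hE3 : Real.exp (-(3*ε)) = Real.exp (-ε) * Real.exp (-ε) * Real.exp (-ε) := by
    rw [show -(3*ε) = -ε + -ε + -ε from by ring, Real.exp_add, Real.exp_add]
  have hE2 : Real.exp (2*ε) = Real.exp ε * Real.exp ε := by
    rw [show (2:ℝ)*ε = ε + ε from by ring, Real.exp_add]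
  rw [hE3, hE2]
  set E := Real.exp ε with hEdef
  set F := Real.exp (-ε) with hFdef
  have hE0 : 0 < E := Real.exp_pos _
  have hF0 : 0 < F := Real.exp_pos _
  have hEF : E * F = 1 := by rw [hEdef, hFdef, ← Real.exp_add]; simp
  have hE1 : 1 ≤ E := Real.one_le_exp hε0.le
  have hE14 : E ≤ 1.4 := expE14 ε (by linarith)
  obtain ⟨hF1, hEpF, hEF2⟩ := efacts E F hE0 hF0 hEF hE1 hE14
  have hδN0 : 0 ≤ δ/N := by positivity
  have hδNδ : δ/N ≤ δ := div_le_self hδ0.le hN1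
  have hNδN : N*(δ/N) = δ := by field_simp
  have hd1N : (N-1)*(δ/N) ≤ δ := by
    rw [div_eq_mul_inv, show (N-1)*(δ*N⁻¹) = δ*N⁻¹*N - δ*N⁻¹ from by ring]
    have h1 : δ*N⁻¹*N = δ := by field_simp
    rw [h1]
    linarith [mul_nonneg hδ0.le (inv_pos.mpr hN0).le]
  have hkq : (0:ℝ) ≤ (N-1)*q := mul_nonneg (by linarith) hq0
  have hkq' : (0:ℝ) ≤ (N-1)*q' := mul_nonneg (by linarith) hq'0
  have hD0 : (0:ℝ) < (N-1)*q+1 := by linarith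
  have hD'0 : (0:ℝ) < (N-1)*q'+1 := by linarith
  have hD1 : (1:ℝ) ≤ (N-1)*q+1 := by linarith
  refine ⟨⟨?_, ?_⟩, ?_⟩
  · -- part (i) lower
    rcases le_or_gt (F*q) (δ/N) with hcase | hcase
    · have h1 : F * (N * q) / ((N - 1) * q + 1) ≤ F * (N*q) :=
        div_le_self (by positivity) hD1
      have h2 : N*(F*q) ≤ δ := by
        have h := mul_le_mul_of_nonneg_left hcase hN0.le
        rw [hNδN] at h; exact h
      have h3 : 0 ≤ N * q' / ((N - 1) * q' + 1) := by positivity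
      linarith [h1, h2, h3]
    · have ha0 : 0 ≤ F*q - δ/N := by linarith
      have S1 := hmono N (F*q - δ/N) q' hN1 ha0 hlow
      have S2 := hsub N (F*q - δ/N) (δ/N) hN1 ha0 hδN0
      rw [show F*q - δ/N + δ/N = F*q from by ring] at S2
      have S3 := hscale_down N F q hN1 hF0 hF1 hq0
      have S4 : N*(δ/N)/((N-1)*(δ/N)+1) ≤ δ := (hsmall N (δ/N) hN1 hδN0).trans (le_of_eq hNδN)
      have heq : F * (N * q) / ((N - 1) * q + 1) = F * (N*q/((N-1)*q+1)) := by ring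
      rw [heq]
      linarith
  · -- part (i) upper
    have U1 := hmono N q' (E*q + δ/N) hN1 hq'0 hup
    have U2 := hsub N (E*q) (δ/N) hN1 (by positivity) hδN0
    have U3 := hscale_up N E q hN1 hE1 hq0
    have U4 : N*(δ/N)/((N-1)*(δ/N)+1) ≤ δ := (hsmall N (δ/N) hN1 hδN0).trans (le_of_eq hNδN)
    have heq : E * (N * q) / ((N - 1) * q + 1) = E * (N*q/((N-1)*q+1)) := by ring
    rw [heq]
    linarith
  · -- part (ii)
    have h := part2 N q q' (δ/N) δ E F hN1 hq0 hq2 hq'0 hq'2 hδ0 hδ3 hδN0 hδNδ hd1N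
      hE0 hF0 hEF hE1 hE14 hF1 hEpF hEF2 hlow hup
    exact ⟨by linarith [h.1], by linarith [h.2]⟩
end

section
/- Fix positive integers m and n, a real B ≥ 0, and a function f : ℕⁿ → ℝ with 0 ≤ f(X) ≤ B for all X ∈ ℕⁿ. For p > 0, the series g(p) = Σ_{X ∈ ℕⁿ} f(X)·∏ᵢ₌₁ⁿ e^{−m·p}·(m·p)^{Xᵢ}/Xᵢ! converges absolutely (it is the expectation of f(X₁,…,Xₙ) when X₁,…,Xₙ are i.i.d. Poisson(m·p)). Moreover, g is differentiable at every p > 0, and its derivative g'(p) satisfies p·g'(p) = Σ_{X ∈ ℕⁿ} f(X)·(Σᵢ₌₁ⁿ (Xᵢ − m·p))·∏ᵢ₌₁ⁿ e^{−m·p}·(m·p)^{Xᵢ}/Xᵢ!. -/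
/-!
Write `w_t(X) = ∏ᵢ e^{-t} t^{Xᵢ} / Xᵢ!`. Each factor has logarithmic derivative `(Xᵢ - t) / t`,
so `t · ∂ₜ w_t(X) = (∑ᵢ (Xᵢ - t)) · w_t(X)`. For `s` between `t/2` and `2t` this derivative is
dominated by a constant times `∏ᵢ (4t)^{Xᵢ} / Xᵢ!` (the polynomial factor is absorbed by
`∑ᵢ Xᵢ ≤ 2^{∑ᵢ Xᵢ}`), a summable family; so for bounded `f` the series may be differentiated
term by term, and the statement about `g` follows by the chain rule with `t = m p`.
-/

open Finset Nat Real

theorem summable_prod_apply_of_nonneg {α : Type*} {g : α → ℝ} (hg0 : 0 ≤ g) (hg : Summable g)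
    (ι : Type*) [Fintype ι] : Summable fun X : ι → α => ∏ i, g (X i) := by
  suffices h : ∀ n, Summable fun X : Fin n → α => ∏ i, g (X i) by
    let e := Fintype.equivFin ι
    refine ((e.arrowCongr (Equiv.refl α)).symm.summable_iff).mp ?_
    convert h (Fintype.card ι) using 2 with X
    exact Fintype.prod_equiv e _ _ fun i => by simp [Equiv.arrowCongr]
  intro n
  induction n with
  | zero => exact .of_finite
  | succ n ih =>
    refine ((Fin.consEquiv fun _ => α).summable_iff).mp ?_
    refine (hg.mul_of_nonneg ih hg0 fun X => prod_nonneg fun i _ => hg0 _).congr ?_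
    rintro ⟨a, X⟩
    simp [Fin.consEquiv, Fin.prod_univ_succ]

noncomputable def poissonWeight (t : ℝ) (k : ℕ) : ℝ := exp (-t) * t ^ k / k !

section PoissonWeight

variable {t R : ℝ}

theorem poissonWeight_nonneg (ht : 0 ≤ t) (k : ℕ) : 0 ≤ poissonWeight t k := by
  unfold poissonWeight; positivity

theorem summable_poissonWeight (t : ℝ) : Summable (poissonWeight t) := by
  refine ((summable_pow_div_factorial t).mul_left (exp (-t))).congr fun k => ?_
  rw [poissonWeight, mul_div_assoc]

theorem poissonWeight_le (ht : 0 ≤ t) (htR : t ≤ R) (k : ℕ) :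
    poissonWeight t k ≤ R ^ k / k ! := by
  have hexp : exp (-t) ≤ 1 := exp_le_one_iff.mpr (by linarith)
  calc poissonWeight t k ≤ 1 * R ^ k / k ! := by unfold poissonWeight; gcongr
    _ = R ^ k / k ! := by rw [one_mul]

theorem hasDerivAt_poissonWeight (ht : t ≠ 0) (k : ℕ) :
    HasDerivAt (poissonWeight · k) ((k - t) / t * poissonWeight t k) t := by
  refine (((hasDerivAt_neg t).exp.mul (hasDerivAt_pow k t)).div_const (k ! : ℝ)).congr_deriv ?_
  rcases k with _ | k
  · simp only [poissonWeight, CharP.cast_eq_zero, zero_sub, pow_zero, mul_one, factorial_zero,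
      cast_one, div_one, mul_neg, zero_tsub, mul_zero, add_zero]
    field_simp
  · simp only [poissonWeight, pow_succ, Nat.add_sub_cancel]
    push_cast
    field_simp
    ring

variable {ι : Type*} [Fintype ι]

theorem hasDerivAt_prod_poissonWeight (ht : t ≠ 0) (X : ι → ℕ) :
    HasDerivAt (fun s => ∏ i, poissonWeight s (X i))
      ((∑ i, ((X i : ℝ) - t)) / t * ∏ i, poissonWeight t (X i)) t := by
  classical
  refine (HasDerivAt.fun_finsetProd (u := univ) fun i _ =>
    hasDerivAt_poissonWeight ht (X i)).congr_deriv ?_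
  symm
  rw [sum_div, sum_mul]
  refine sum_congr rfl fun i _ => ?_
  rw [smul_eq_mul, ← mul_prod_erase univ (fun j => poissonWeight t (X j)) (mem_univ i)]
  ring

theorem abs_sum_sub_mul_prod_poissonWeight_le (ht : 0 ≤ t) (htR : t ≤ R) (X : ι → ℕ) :
    |∑ i, ((X i : ℝ) - t)| * ∏ i, poissonWeight t (X i)
      ≤ (1 + Fintype.card ι * R) * ∏ i, (2 * R) ^ X i / (X i)! := by
  have hR : 0 ≤ R := ht.trans htR
  have hsum : |∑ i, ((X i : ℝ) - t)| ≤ ∑ i, (X i : ℝ) + Fintype.card ι * R :=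
    calc |∑ i, ((X i : ℝ) - t)| ≤ ∑ i, |(X i : ℝ) - t| := abs_sum_le_sum_abs _ _
      _ ≤ ∑ i, ((X i : ℝ) + R) :=
        sum_le_sum fun i _ => abs_le.mpr ⟨by linarith [(X i).cast_nonneg (α := ℝ)], by linarith⟩
      _ = ∑ i, (X i : ℝ) + Fintype.card ι * R := by simp [sum_add_distrib]
  have hprod : ∏ i, poissonWeight t (X i) ≤ ∏ i, R ^ X i / (X i)! :=
    prod_le_prod (fun i _ => poissonWeight_nonneg ht _) fun i _ => poissonWeight_le ht htR _
  have hlin : ∑ i, (X i : ℝ) + Fintype.card ι * R ≤ (1 + Fintype.card ι * R) * 2 ^ ∑ i, X i := by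
    have h1 : ∑ i, (X i : ℝ) ≤ 2 ^ ∑ i, X i := by exact_mod_cast (Nat.lt_two_pow_self).le
    have h2 : (1 : ℝ) ≤ 2 ^ ∑ i, X i := one_le_pow₀ one_le_two
    nlinarith [mul_le_mul_of_nonneg_left h2 (by positivity : (0 : ℝ) ≤ Fintype.card ι * R)]
  calc |∑ i, ((X i : ℝ) - t)| * ∏ i, poissonWeight t (X i)
      ≤ (∑ i, (X i : ℝ) + Fintype.card ι * R) * ∏ i, R ^ X i / (X i)! :=
        mul_le_mul hsum hprod (prod_nonneg fun i _ => poissonWeight_nonneg ht _) (by positivity)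
    _ ≤ (1 + Fintype.card ι * R) * 2 ^ (∑ i, X i) * ∏ i, R ^ X i / (X i)! :=
        mul_le_mul_of_nonneg_right hlin (by positivity)
    _ = (1 + Fintype.card ι * R) * ∏ i, (2 * R) ^ X i / (X i)! := by
        rw [mul_assoc, ← prod_pow_eq_pow_sum, ← prod_mul_distrib]
        simp only [mul_pow, mul_div_assoc]

end PoissonWeight

section BoundedSeries

variable {ι : Type*} [Fintype ι] {f : (ι → ℕ) → ℝ} {B t : ℝ}

theorem summable_mul_prod_poissonWeight (hf : ∀ X, ‖f X‖ ≤ B) (ht : 0 ≤ t) :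
    Summable fun X : ι → ℕ => f X * ∏ i, poissonWeight t (X i) := by
  refine .of_norm_bounded ((summable_prod_apply_of_nonneg (poissonWeight_nonneg ht)
    (summable_poissonWeight t) ι).mul_left B) fun X => ?_
  have hW : 0 ≤ ∏ i, poissonWeight t (X i) := prod_nonneg fun i _ => poissonWeight_nonneg ht _
  rw [norm_mul, norm_of_nonneg hW]
  exact mul_le_mul_of_nonneg_right (hf X) hW

theorem summable_mul_sum_sub_mul_prod_poissonWeight (hf : ∀ X, ‖f X‖ ≤ B) (ht : 0 ≤ t) :
    Summable fun X : ι → ℕ =>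
      f X * (∑ i, ((X i : ℝ) - t)) * ∏ i, poissonWeight t (X i) := by
  refine .of_norm_bounded (((summable_prod_apply_of_nonneg (fun k => by positivity)
    (summable_pow_div_factorial (2 * t)) ι).mul_left (1 + Fintype.card ι * t)).mul_left B)
    fun X => ?_
  have hW : 0 ≤ ∏ i, poissonWeight t (X i) := prod_nonneg fun i _ => poissonWeight_nonneg ht _
  rw [norm_mul, norm_mul, norm_of_nonneg hW, Real.norm_eq_abs (∑ i, _), mul_assoc]
  exact mul_le_mul (hf X) (abs_sum_sub_mul_prod_poissonWeight_le ht le_rfl X) (by positivity)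
    ((norm_nonneg _).trans (hf X))

theorem hasDerivAt_tsum_mul_prod_poissonWeight (hf : ∀ X, ‖f X‖ ≤ B) (ht : 0 < t) :
    HasDerivAt (fun s => ∑' X : ι → ℕ, f X * ∏ i, poissonWeight s (X i))
      (∑' X : ι → ℕ, f X * ((∑ i, ((X i : ℝ) - t)) / t * ∏ i, poissonWeight t (X i))) t := by
  set U : Set ℝ := Set.Ioo (t / 2) (2 * t)
  have htU : t ∈ U := ⟨by linarith, by linarith⟩
  set u : (ι → ℕ) → ℝ := fun X =>
    B * (2 / t * ((1 + Fintype.card ι * (2 * t)) * ∏ i, (2 * (2 * t)) ^ X i / (X i)!))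
  have hu : Summable u := (((summable_prod_apply_of_nonneg (fun k => by positivity)
    (summable_pow_div_factorial _) ι).mul_left _).mul_left _).mul_left _
  have hderiv : ∀ X, ∀ s ∈ U, HasDerivAt (fun s => f X * ∏ i, poissonWeight s (X i))
      (f X * ((∑ i, ((X i : ℝ) - s)) / s * ∏ i, poissonWeight s (X i))) s :=
    fun X s hs => (hasDerivAt_prod_poissonWeight (by linarith [hs.1]) X).const_mul (f X)
  have hbound : ∀ X, ∀ s ∈ U,
      ‖f X * ((∑ i, ((X i : ℝ) - s)) / s * ∏ i, poissonWeight s (X i))‖ ≤ u X := by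
    rintro X s ⟨hs₁, hs₂⟩
    have hs₀ : 0 < s := by linarith
    have hW : 0 ≤ ∏ i, poissonWeight s (X i) :=
      prod_nonneg fun i _ => poissonWeight_nonneg hs₀.le _
    rw [norm_mul, norm_mul, norm_div, norm_of_nonneg hW, norm_of_nonneg hs₀.le,
      Real.norm_eq_abs]
    refine mul_le_mul (hf X) ?_ (by positivity) ((norm_nonneg _).trans (hf X))
    calc |∑ i, ((X i : ℝ) - s)| / s * ∏ i, poissonWeight s (X i)
        = (|∑ i, ((X i : ℝ) - s)| * ∏ i, poissonWeight s (X i)) / s := by ring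
      _ ≤ ((1 + Fintype.card ι * (2 * t)) * ∏ i, (2 * (2 * t)) ^ X i / (X i)!) / (t / 2) :=
        div_le_div₀ (by positivity) (abs_sum_sub_mul_prod_poissonWeight_le hs₀.le hs₂.le X)
          (by positivity) hs₁.le
      _ = 2 / t * ((1 + Fintype.card ι * (2 * t)) * ∏ i, (2 * (2 * t)) ^ X i / (X i)!) := by
        field_simp
  exact hasDerivAt_tsum_of_isPreconnected hu isOpen_Ioo isPreconnected_Ioo hderiv hbound htU
    (summable_mul_prod_poissonWeight hf ht.le) htU

end BoundedSeries

theorem stmt_6_general (m n : ℕ) (hm : 0 < m) (B : ℝ)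
    (f : (Fin n → ℕ) → ℝ) (hf : ∀ X, 0 ≤ f X ∧ f X ≤ B) :
    ∀ p : ℝ, 0 < p →
      Summable (fun X : Fin n → ℕ =>
        f X * ∏ i, Real.exp (-((m : ℝ) * p)) * ((m : ℝ) * p) ^ (X i) /
          (Nat.factorial (X i) : ℝ)) ∧
      Summable (fun X : Fin n → ℕ =>
        f X * (∑ i, ((X i : ℝ) - (m : ℝ) * p)) *
          ∏ i, Real.exp (-((m : ℝ) * p)) * ((m : ℝ) * p) ^ (X i) /
            (Nat.factorial (X i) : ℝ)) ∧
      ∃ D : ℝ,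
        HasDerivAt (fun q : ℝ => ∑' X : Fin n → ℕ,
            f X * ∏ i, Real.exp (-((m : ℝ) * q)) * ((m : ℝ) * q) ^ (X i) /
              (Nat.factorial (X i) : ℝ)) D p ∧
        p * D = ∑' X : Fin n → ℕ,
          f X * (∑ i, ((X i : ℝ) - (m : ℝ) * p)) *
            ∏ i, Real.exp (-((m : ℝ) * p)) * ((m : ℝ) * p) ^ (X i) /
              (Nat.factorial (X i) : ℝ) := by
  intro p hp
  have hf' : ∀ X, ‖f X‖ ≤ B := fun X => (norm_of_nonneg (hf X).1).trans_le (hf X).2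
  have hmp : 0 < (m : ℝ) * p := by positivity
  refine ⟨summable_mul_prod_poissonWeight hf' hmp.le,
    summable_mul_sum_sub_mul_prod_poissonWeight hf' hmp.le, _,
    (hasDerivAt_tsum_mul_prod_poissonWeight hf' hmp).comp p ((hasDerivAt_id p).const_mul _), ?_⟩
  rw [mul_one, mul_comm _ (m : ℝ), ← mul_assoc, ← tsum_mul_left]
  refine tsum_congr fun X => ?_
  unfold poissonWeight
  field_simp

/-- Lemma (derivative of Poisson expectations): for a nonnegative bounded `f : ℕⁿ → ℝ`,
the series defining `g(p) = E[f(X₁,…,Xₙ)]` with `Xᵢ` i.i.d. `Poisson(m·p)` converges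
absolutely for every `p > 0`, `g` is differentiable there, and
`p·g'(p) = E[f(X)·Σᵢ(Xᵢ − m·p)]`. -/
theorem stmt_6 (m n : ℕ) (hm : 0 < m) (hn : 0 < n) (B : ℝ) (hB : 0 ≤ B)
    (f : (Fin n → ℕ) → ℝ) (hf : ∀ X, 0 ≤ f X ∧ f X ≤ B) :
    ∀ p : ℝ, 0 < p →
      Summable (fun X : Fin n → ℕ =>
        f X * ∏ i, Real.exp (-((m : ℝ) * p)) * ((m : ℝ) * p) ^ (X i) /
          (Nat.factorial (X i) : ℝ)) ∧
      Summable (fun X : Fin n → ℕ =>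
        f X * (∑ i, ((X i : ℝ) - (m : ℝ) * p)) *
          ∏ i, Real.exp (-((m : ℝ) * p)) * ((m : ℝ) * p) ^ (X i) /
            (Nat.factorial (X i) : ℝ)) ∧
      ∃ D : ℝ,
        HasDerivAt (fun q : ℝ => ∑' X : Fin n → ℕ,
            f X * ∏ i, Real.exp (-((m : ℝ) * q)) * ((m : ℝ) * q) ^ (X i) /
              (Nat.factorial (X i) : ℝ)) D p ∧
        p * D = ∑' X : Fin n → ℕ,
          f X * (∑ i, ((X i : ℝ) - (m : ℝ) * p)) *
            ∏ i, Real.exp (-((m : ℝ) * p)) * ((m : ℝ) * p) ^ (X i) /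
              (Nat.factorial (X i) : ℝ) :=
  stmt_6_general m n hm B f hf
end

section
/- Fix positive integers m, n, d, a real B ≥ 0, and a function f : ℕⁿ → ℝ with 0 ≤ f(X) ≤ B for all X ∈ ℕⁿ. Then d·∫_{1/(2d)}^{3/(2d)} [ Σ_{X ∈ ℕⁿ} ( (f(X) − p)² + ((p − 1/(2d))·(3/(2d) − p)/p)·(f(X) − p)·Σᵢ₌₁ⁿ (Xᵢ − m·p) )·∏ᵢ₌₁ⁿ e^{−m·p}·(m·p)^{Xᵢ}/Xᵢ! ] dp ≥ 1/(12·d²). (The left-hand side is the expectation of (f(X)−p)² + ((p−1/(2d))(3/(2d)−p)/p)·(f(X)−p)·Σᵢ(Xᵢ−m·p) when p is uniform on [1/(2d), 3/(2d)] and, conditionally on p, the coordinates X₁,…,Xₙ are i.i.d. Poisson(m·p).) -/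
/-!
Write `[a, b] = [1/(2d), 3/(2d)]`, `c = m`, and for fixed `X` put `y = f(X)` and
`W_X(p) = ∏ᵢ Poisson(cp)(Xᵢ)`. Since `∂ₚ W_X = (∑ᵢ (Xᵢ - cp) / p) · W_X`, the second summand of
the integrand is `(p - a)(b - p)(y - p) · ∂ₚ W_X`, and integrating by parts over `[a, b]` (the
boundary terms vanish) turns the integrand into `((y - (a + b)/2)² + ψ(p)) · W_X(p)` with
`ψ(p) = (p - a)(b - p) - (p - (a + b)/2)²`. Dropping the square and summing over `X` (the `W_X`
sum to `1`) leaves `∫ₐᵇ ψ = (b - a)³ / 12 = 1/(12 d³)`.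

The sum over `X` and the integral commute by dominated convergence: on `[a, b]`,
`(1 + ∑ᵢ Xᵢ) · W_X(cp) ≤ e^{2ncb} · W_X(2cb)`, which is summable in `X`.
-/

open MeasureTheory Real Set intervalIntegral
open scoped Interval

noncomputable def poissonProb (l : ℝ) (k : ℕ) : ℝ := exp (-l) * l ^ k / k.factorial

noncomputable def iidPoisson {n : ℕ} (l : ℝ) (X : Fin n → ℕ) : ℝ := ∏ i, poissonProb l (X i)

lemma poissonProb_nonneg {l : ℝ} (hl : 0 ≤ l) (k : ℕ) : 0 ≤ poissonProb l k := by
  unfold poissonProb; positivity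

lemma hasSum_poissonProb {l : ℝ} (hl : 0 ≤ l) : HasSum (poissonProb l) 1 :=
  ProbabilityTheory.hasSum_one_poissonMeasure ⟨l, hl⟩

theorem hasSum_prod_fin_pow_of_nonneg {α : Type*} {g : α → ℝ} {s : ℝ} (hg : ∀ k, 0 ≤ g k)
    (h : HasSum g s) (n : ℕ) : HasSum (fun X : Fin n → α => ∏ i, g (X i)) (s ^ n) := by
  induction n with
  | zero => simp
  | succ n ih =>
    have hg' : ∀ Y : Fin n → α, 0 ≤ ∏ i, g (Y i) := fun Y => Finset.prod_nonneg fun i _ => hg _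
    have hsum := Summable.mul_of_nonneg h.summable ih.summable hg hg'
    rw [pow_succ', ← (Fin.consEquiv fun _ : Fin (n + 1) => α).hasSum_iff]
    refine (h.mul ih hsum).congr_fun fun z => ?_
    simp [Fin.consEquiv, Fin.prod_univ_succ]

lemma iidPoisson_nonneg {n : ℕ} {l : ℝ} (hl : 0 ≤ l) (X : Fin n → ℕ) : 0 ≤ iidPoisson l X :=
  Finset.prod_nonneg fun _ _ => poissonProb_nonneg hl _

lemma hasSum_iidPoisson {n : ℕ} {l : ℝ} (hl : 0 ≤ l) : HasSum (iidPoisson (n := n) l) 1 := by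
  have h := hasSum_prod_fin_pow_of_nonneg (poissonProb_nonneg hl) (hasSum_poissonProb hl) n
  rwa [one_pow] at h

lemma iidPoisson_eq_exp_mul_pow_div {n : ℕ} (l : ℝ) (X : Fin n → ℕ) :
    iidPoisson l X = exp (-(n * l)) * l ^ (∑ i, X i) / ∏ i, ((X i).factorial : ℝ) := by
  simp only [iidPoisson, poissonProb, Finset.prod_div_distrib, Finset.prod_mul_distrib,
    Finset.prod_const, Finset.prod_pow_eq_pow_sum, Finset.card_univ, Fintype.card_fin,
    ← exp_nat_mul, neg_mul_eq_mul_neg]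

lemma one_add_sum_mul_iidPoisson_le {n : ℕ} {l l' : ℝ} (hl : 0 ≤ l) (hll' : l ≤ l')
    (X : Fin n → ℕ) :
    (1 + ∑ i, (X i : ℝ)) * iidPoisson l X ≤ exp (2 * n * l') * iidPoisson (2 * l') X := by
  set T := ∑ i, X i
  have hT : 1 + ∑ i, (X i : ℝ) ≤ 2 ^ T := by
    have : 1 + T ≤ 2 ^ T := by have := Nat.lt_two_pow_self (n := T); omega
    exact_mod_cast this
  have hexp : exp (2 * n * l') * exp (-(n * (2 * l'))) = 1 := by
    rw [← exp_add, show 2 * n * l' + -(n * (2 * l')) = 0 by ring, exp_zero]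
  rw [iidPoisson_eq_exp_mul_pow_div, iidPoisson_eq_exp_mul_pow_div]
  calc (1 + ∑ i, (X i : ℝ)) * (exp (-(n * l)) * l ^ T / ∏ i, ((X i).factorial : ℝ))
      ≤ 2 ^ T * (1 * l' ^ T / ∏ i, ((X i).factorial : ℝ)) := by
        gcongr
        exact exp_le_one_iff.mpr (by nlinarith [n.cast_nonneg (α := ℝ)])
    _ = exp (2 * n * l') *
          (exp (-(n * (2 * l'))) * (2 * l') ^ T / ∏ i, ((X i).factorial : ℝ)) := by
        rw [mul_pow]
        linear_combination (-(2 ^ T * l' ^ T / ∏ i, ((X i).factorial : ℝ))) * hexp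

lemma hasDerivAt_iidPoisson_mul {n : ℕ} (c : ℝ) (X : Fin n → ℕ) {p : ℝ} (hp : p ≠ 0) :
    HasDerivAt (fun q => iidPoisson (c * q) X)
      ((∑ i, ((X i : ℝ) - c * p)) / p * iidPoisson (c * p) X) p := by
  simp only [iidPoisson_eq_exp_mul_pow_div]
  set T := ∑ i, X i with hT
  have hTc : ∑ i, ((X i : ℝ) - c * p) = T - n * (c * p) := by
    simp [hT, Finset.sum_sub_distrib]
  have hexp : HasDerivAt (fun q : ℝ => -(n * (c * q))) (-(n * c)) p := by
    simpa only [id, mul_one, neg_mul, mul_assoc] using (hasDerivAt_id p).const_mul (-(n * c))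
  have hpow : HasDerivAt (fun q : ℝ => c * q) c p := by
    simpa using (hasDerivAt_id p).const_mul c
  refine ((hexp.exp.mul (hpow.pow T)).div_const _).congr_deriv ?_
  rw [hTc, Pi.pow_apply]
  rcases Nat.eq_zero_or_pos T with h0 | hpos
  · simp only [h0]; field_simp; ring
  · obtain ⟨k, hk⟩ := Nat.exists_eq_add_of_lt hpos
    simp only [hk, Nat.add_sub_cancel]
    field_simp
    push_cast
    ring

lemma continuous_iidPoisson_mul {n : ℕ} (c : ℝ) (X : Fin n → ℕ) :
    Continuous fun q => iidPoisson (c * q) X := by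
  unfold iidPoisson poissonProb; fun_prop

noncomputable def fingerprintWeight (a b p : ℝ) : ℝ := (p - a) * (b - p) - (p - (a + b) / 2) ^ 2

lemma integral_fingerprintWeight (a b : ℝ) :
    ∫ p in a..b, fingerprintWeight a b p = (b - a) ^ 3 / 12 := by
  have h : fingerprintWeight a b = fun p => ((b - a) / 2) ^ 2 - 2 * (p - (a + b) / 2) ^ 2 := by
    ext p; unfold fingerprintWeight; ring
  rw [h, integral_comp_sub_right (fun x => ((b - a) / 2) ^ 2 - 2 * x ^ 2)]
  simp
  ring

lemma abs_fingerprintWeight_le {a b p : ℝ} (hp : p ∈ Icc a b) :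
    |fingerprintWeight a b p| ≤ (b - a) ^ 2 := by
  obtain ⟨hap, hpb⟩ := hp
  unfold fingerprintWeight
  rw [abs_le]
  constructor <;> nlinarith

noncomputable def fingerprintIntegrand {n : ℕ} (a b c y : ℝ) (X : Fin n → ℕ) (p : ℝ) : ℝ :=
  ((y - p) ^ 2 + ((p - a) * (b - p) / p) * (y - p) * ∑ i, ((X i : ℝ) - c * p)) *
    iidPoisson (c * p) X

lemma integral_fingerprintWeight_mul_le {n : ℕ} {a b c : ℝ} (ha : 0 < a) (hab : a ≤ b)
    (hc : 0 ≤ c) (y : ℝ) (X : Fin n → ℕ) :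
    ∫ p in a..b, fingerprintWeight a b p * iidPoisson (c * p) X ≤
      ∫ p in a..b, fingerprintIntegrand a b c y X p := by
  set W := fun p => iidPoisson (c * p) X with hW
  set S := fun p => ∑ i, ((X i : ℝ) - c * p) with hS
  have hne : ∀ p ∈ uIcc a b, p ≠ 0 := fun p hp =>
    (ha.trans_le (by rw [uIcc_of_le hab] at hp; exact hp.1)).ne'
  have hu : ∀ p ∈ uIcc a b, HasDerivAt (fun q => (q - a) * (b - q) * (y - q))
      ((a + b - 2 * p) * (y - p) - (p - a) * (b - p)) p := fun p _ => by
    refine ((((hasDerivAt_id p).sub_const a).mul ((hasDerivAt_id p).const_sub b)).mul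
      ((hasDerivAt_id p).const_sub y)).congr_deriv ?_
    simp only [id, Pi.mul_apply]
    ring
  have hv : ∀ p ∈ uIcc a b, HasDerivAt W (S p / p * W p) p := fun p hp =>
    hasDerivAt_iidPoisson_mul c X (hne p hp)
  have hWc : Continuous W := continuous_iidPoisson_mul c X
  have hv' : ContinuousOn (fun p => S p / p * W p) (uIcc a b) := by
    fun_prop (disch := assumption)
  have hu' : Continuous fun p => (a + b - 2 * p) * (y - p) - (p - a) * (b - p) := by fun_prop
  have hparts := integral_mul_deriv_eq_deriv_mul hu hv (hu'.intervalIntegrable a b)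
    hv'.intervalIntegrable
  have huv' :
      ContinuousOn (fun p => (p - a) * (b - p) * (y - p) * (S p / p * W p)) (uIcc a b) := by
    fun_prop (disch := assumption)
  have hyW : Continuous fun p => (y - p) ^ 2 * W p := by fun_prop
  have hu'W : Continuous fun p => ((a + b - 2 * p) * (y - p) - (p - a) * (b - p)) * W p := by
    fun_prop
  have hψW : Continuous fun p => fingerprintWeight a b p * W p := by
    unfold fingerprintWeight; fun_prop
  calc ∫ p in a..b, fingerprintWeight a b p * W p
      ≤ ∫ p in a..b, ((y - p) ^ 2 * W p -
          ((a + b - 2 * p) * (y - p) - (p - a) * (b - p)) * W p) := by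
        refine integral_mono_on hab (hψW.intervalIntegrable a b)
          ((hyW.sub hu'W).intervalIntegrable a b) fun p hp => ?_
        have hWp : 0 ≤ W p := iidPoisson_nonneg (mul_nonneg hc (ha.le.trans hp.1)) X
        unfold fingerprintWeight
        nlinarith [mul_nonneg (sq_nonneg (y - (a + b) / 2)) hWp]
    _ = (∫ p in a..b, (y - p) ^ 2 * W p) +
          ∫ p in a..b, (p - a) * (b - p) * (y - p) * (S p / p * W p) := by
        rw [integral_sub (hyW.intervalIntegrable a b) (hu'W.intervalIntegrable a b), hparts]
        simp [sub_eq_add_neg]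
    _ = ∫ p in a..b, fingerprintIntegrand a b c y X p := by
        refine (integral_add (hyW.intervalIntegrable a b) huv'.intervalIntegrable).symm.trans
          (integral_congr fun p _ => ?_)
        simp only [fingerprintIntegrand, hW, hS]
        ring

lemma abs_fingerprintIntegrand_le {n : ℕ} {a b c y B p : ℝ} (ha : 0 < a) (hc : 0 ≤ c) (hy : |y| ≤ B)
    (hp : p ∈ Icc a b) (X : Fin n → ℕ) :
    |fingerprintIntegrand a b c y X p| ≤
      ((B + b) ^ 2 + b ^ 2 / a * (B + b) * (1 + n * c * b)) *
        ((1 + ∑ i, (X i : ℝ)) * iidPoisson (c * p) X) := by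
  obtain ⟨hap, hpb⟩ := hp
  have hp0 : 0 < p := ha.trans_le hap
  have hW : 0 ≤ iidPoisson (c * p) X := iidPoisson_nonneg (by positivity) X
  have hT : 0 ≤ ∑ i, (X i : ℝ) := Finset.sum_nonneg fun i _ => Nat.cast_nonneg _
  have hBb : 0 ≤ B + b := by linarith [abs_nonneg y]
  have hdev : |y - p| ≤ B + b := by
    rw [abs_le] at hy ⊢; constructor <;> linarith
  have hratio : |(p - a) * (b - p) / p| ≤ b ^ 2 / a := by
    rw [abs_of_nonneg (by apply div_nonneg <;> nlinarith)]
    gcongr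
    nlinarith
  have hscore : |∑ i, ((X i : ℝ) - c * p)| ≤ (1 + n * c * b) * (1 + ∑ i, (X i : ℝ)) := by
    rw [Finset.sum_sub_distrib, Finset.sum_const, Finset.card_univ, Fintype.card_fin,
      nsmul_eq_mul, abs_le]
    constructor <;> nlinarith [mul_nonneg (mul_nonneg (n.cast_nonneg (α := ℝ)) hc) hp0.le,
      mul_nonneg (mul_nonneg (mul_nonneg (n.cast_nonneg (α := ℝ)) hc) (hp0.le.trans hpb)) hT]
  have hfactor : |(y - p) ^ 2 + (p - a) * (b - p) / p * (y - p) * ∑ i, ((X i : ℝ) - c * p)| ≤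
      ((B + b) ^ 2 + b ^ 2 / a * (B + b) * (1 + n * c * b)) * (1 + ∑ i, (X i : ℝ)) :=
    calc _ ≤ |y - p| ^ 2 + |(p - a) * (b - p) / p| * |y - p| * |∑ i, ((X i : ℝ) - c * p)| := by
          refine (abs_add_le _ _).trans_eq ?_
          rw [abs_mul, abs_mul, abs_pow]
      _ ≤ (B + b) ^ 2 + b ^ 2 / a * (B + b) * ((1 + n * c * b) * (1 + ∑ i, (X i : ℝ))) := by
          gcongr
      _ ≤ _ := by nlinarith [mul_nonneg (sq_nonneg (B + b)) hT]
  rw [fingerprintIntegrand, abs_mul, abs_of_nonneg hW, ← mul_assoc]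
  exact mul_le_mul_of_nonneg_right hfactor hW

lemma hasSum_intervalIntegral_of_norm_le {ι : Type*} [Countable ι] {F : ι → ℝ → ℝ} {a b : ℝ}
    (hF : ∀ i, AEStronglyMeasurable (F i) (volume.restrict (Ι a b))) {C : ι → ℝ}
    (hC : Summable C) (hFC : ∀ i, ∀ p ∈ Ι a b, ‖F i p‖ ≤ C i) :
    HasSum (fun i => ∫ p in a..b, F i p) (∫ p in a..b, ∑' i, F i p) :=
  hasSum_integral_of_dominated_convergence (fun i _ => C i) hF (fun i => ae_of_all _ (hFC i))
    (ae_of_all _ fun _ _ => hC) intervalIntegrable_const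
    (ae_of_all _ fun p hp => (hC.of_norm_bounded fun i => hFC i p hp).hasSum)

lemma hasSum_intervalIntegral_of_le_iidPoisson {n : ℕ} {F : (Fin n → ℕ) → ℝ → ℝ}
    {a b c K : ℝ} (ha : 0 ≤ a) (hab : a ≤ b) (hc : 0 ≤ c) (hK : 0 ≤ K)
    (hF : ∀ X, Measurable (F X))
    (hFK : ∀ X, ∀ p ∈ Icc a b, |F X p| ≤ K * ((1 + ∑ i, (X i : ℝ)) * iidPoisson (c * p) X)) :
    HasSum (fun X => ∫ p in a..b, F X p) (∫ p in a..b, ∑' X, F X p) := by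
  have hcb : 0 ≤ 2 * (c * b) := by have := ha.trans hab; positivity
  refine hasSum_intervalIntegral_of_norm_le (fun X => (hF X).aestronglyMeasurable)
    (((hasSum_iidPoisson hcb).summable.mul_left (exp (2 * n * (c * b)))).mul_left K)
    fun X p hp => ?_
  rw [uIoc_of_le hab] at hp
  calc ‖F X p‖ ≤ K * ((1 + ∑ i, (X i : ℝ)) * iidPoisson (c * p) X) :=
        hFK X p (Ioc_subset_Icc_self hp)
    _ ≤ K * (exp (2 * n * (c * b)) * iidPoisson (2 * (c * b)) X) :=
      mul_le_mul_of_nonneg_left (one_add_sum_mul_iidPoisson_le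
        (mul_nonneg hc (ha.trans hp.1.le)) (mul_le_mul_of_nonneg_left hp.2 hc) X) hK

theorem le_integral_tsum_fingerprintIntegrand {n : ℕ} {a b c B : ℝ} (ha : 0 < a) (hab : a ≤ b)
    (hc : 0 ≤ c) {f : (Fin n → ℕ) → ℝ} (hf : ∀ X, |f X| ≤ B) :
    (b - a) ^ 3 / 12 ≤ ∫ p in a..b, ∑' X, fingerprintIntegrand a b c (f X) X p := by
  have hB : 0 ≤ B := (abs_nonneg _).trans (hf 0)
  have hweight : HasSum
      (fun X : Fin n → ℕ => ∫ p in a..b, fingerprintWeight a b p * iidPoisson (c * p) X)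
      ((b - a) ^ 3 / 12) := by
    rw [← integral_fingerprintWeight]
    convert hasSum_intervalIntegral_of_le_iidPoisson
      (F := fun X p => fingerprintWeight a b p * iidPoisson (c * p) X) ha.le hab hc
      (sq_nonneg (b - a))
      (fun X => by unfold fingerprintWeight iidPoisson poissonProb; fun_prop)
      (fun X p hp => ?_) using 1
    · refine integral_congr fun p hp => ?_
      rw [uIcc_of_le hab] at hp
      rw [tsum_mul_left, (hasSum_iidPoisson (mul_nonneg hc (ha.le.trans hp.1))).tsum_eq, mul_one]
    · have hW := iidPoisson_nonneg (mul_nonneg hc (ha.le.trans hp.1)) X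
      have hT : 0 ≤ ∑ i, (X i : ℝ) := Finset.sum_nonneg fun i _ => Nat.cast_nonneg _
      rw [abs_mul, abs_of_nonneg hW]
      calc _ ≤ (b - a) ^ 2 * iidPoisson (c * p) X := by
            gcongr; exact abs_fingerprintWeight_le hp
        _ ≤ _ := by gcongr; nlinarith
  have hK : 0 ≤ (B + b) ^ 2 + b ^ 2 / a * (B + b) * (1 + n * c * b) := by
    have hncb : 0 ≤ (n : ℝ) * c * b := mul_nonneg (mul_nonneg n.cast_nonneg hc) (ha.le.trans hab)
    have hBb : 0 ≤ B + b := by linarith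
    exact add_nonneg (sq_nonneg _) (mul_nonneg (mul_nonneg (by positivity) hBb) (by linarith))
  have hterm := hasSum_intervalIntegral_of_le_iidPoisson ha.le hab hc hK
    (fun X => by unfold fingerprintIntegrand iidPoisson poissonProb; fun_prop)
    (fun X p hp => abs_fingerprintIntegrand_le ha hc (hf X) hp X)
  exact hasSum_le (fun X => integral_fingerprintWeight_mul_le ha hab hc (f X) X) hweight hterm

theorem stmt_7_general (m n d : ℕ) (hd : 0 < d) (B : ℝ)
    (f : (Fin n → ℕ) → ℝ) (hf : ∀ X, 0 ≤ f X ∧ f X ≤ B) :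
    1 / (12 * (d : ℝ) ^ 2) ≤
      (d : ℝ) * ∫ p in (1 / (2 * (d : ℝ)))..(3 / (2 * (d : ℝ))),
        ∑' X : Fin n → ℕ,
          ((f X - p) ^ 2 +
              ((p - 1 / (2 * (d : ℝ))) * (3 / (2 * (d : ℝ)) - p) / p) * (f X - p) *
                ∑ i, ((X i : ℝ) - (m : ℝ) * p)) *
            ∏ i, Real.exp (-((m : ℝ) * p)) * ((m : ℝ) * p) ^ (X i) /
              (Nat.factorial (X i) : ℝ) := by
  have hd' : (0 : ℝ) < d := by exact_mod_cast hd
  have key := le_integral_tsum_fingerprintIntegrand (a := 1 / (2 * d)) (b := 3 / (2 * d))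
    (by positivity) (by gcongr; norm_num) m.cast_nonneg
    fun X => abs_le.mpr ⟨by linarith [hf X], (hf X).2⟩
  calc 1 / (12 * (d : ℝ) ^ 2) = d * ((3 / (2 * d) - 1 / (2 * d)) ^ 3 / 12) := by
        field_simp; ring
    _ ≤ _ := mul_le_mul_of_nonneg_left key hd'.le

/-- Fingerprinting lemma for Poisson variables: with `p` uniform on `[1/(2d), 3/(2d)]` and,
conditionally on `p`, `X₁,…,Xₙ` i.i.d. `Poisson(m·p)`,
`E[(f(X)−p)² + ((p−1/(2d))(3/(2d)−p)/p)·(f(X)−p)·Σᵢ(Xᵢ−m·p)] ≥ 1/(12d²)`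
for any `f : ℕⁿ → ℝ` with `0 ≤ f ≤ B`. -/
theorem stmt_7 (m n d : ℕ) (hm : 0 < m) (hn : 0 < n) (hd : 0 < d) (B : ℝ) (hB : 0 ≤ B)
    (f : (Fin n → ℕ) → ℝ) (hf : ∀ X, 0 ≤ f X ∧ f X ≤ B) :
    1 / (12 * (d : ℝ) ^ 2) ≤
      (d : ℝ) * ∫ p in (1 / (2 * (d : ℝ)))..(3 / (2 * (d : ℝ))),
        ∑' X : Fin n → ℕ,
          ((f X - p) ^ 2 +
              ((p - 1 / (2 * (d : ℝ))) * (3 / (2 * (d : ℝ)) - p) / p) * (f X - p) *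
                ∑ i, ((X i : ℝ) - (m : ℝ) * p)) *
            ∏ i, Real.exp (-((m : ℝ) * p)) * ((m : ℝ) * p) ^ (X i) /
              (Nat.factorial (X i) : ℝ) :=
  stmt_7_general m n d hd B f hf
end

section
/- There exists an absolute constant δ₀ > 0 such that the following holds. Let d, n, m ≥ 1 be integers, T > 0 a real number, ε > 0, and 0 < δ ≤ min(ε², δ₀). Suppose M assigns to each dataset X = (X_{i,j})_{i∈[n], j∈[m]} of points X_{i,j} ∈ ℝ^d a Borel probability measure M(X) on ℝ^d, and M is (ε,δ) user-level differentially private. Suppose further that for every b ∈ ℝ^d, letting X_b be the dataset with X_{i,j} = b for all i, j, one has M(X_b)({y ∈ ℝ^d : ‖y − b‖₂ ≤ T}) ≥ 2/3. Then n > (1/(3ε))·log(1/δ). -/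
/-!
Group privacy along the hybrid path from the constant dataset at `0` to the constant dataset
at `b` gives `M(X_b)(B) ≤ e^{nε} (M(X_0)(B) + nδ)` for every set `B`. If
`n ≤ log(1/δ)/(3ε)`, then `δ ≤ ε²` and `δ ≤ e^{-40}` force `nδ e^{nε} < 2/3`, so the accuracy
assumption gives every closed ball of radius `T` an `M(X_0)`-mass of at least
`(2/3) e^{-nε} - nδ > 0`. But `ℝ^d` contains infinitely many disjoint such balls, which is
impossible for a probability measure.
-/

open MeasureTheory Metric Real Function
open scoped ENNReal

theorem ENNReal.le_pow_mul_add_of_le_mul_add {u : ℕ → ℝ≥0∞} {a d : ℝ≥0∞} {N : ℕ} (ha : 1 ≤ a)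
    (hu : ∀ k < N, u (k + 1) ≤ a * u k + d) : u N ≤ a ^ N * (u 0 + N * d) := by
  induction N with
  | zero => simp
  | succ k ih =>
    calc u (k + 1) ≤ a * u k + d := hu k k.lt_succ_self
      _ ≤ a * (a ^ k * (u 0 + k * d)) + a ^ (k + 1) * d := by
          gcongr
          · exact ih fun j hj => hu j (hj.trans k.lt_succ_self)
          · exact le_mul_of_one_le_left' (one_le_pow₀ ha)
      _ = a ^ (k + 1) * (u 0 + (k + 1 : ℕ) * d) := by push_cast; ring

def IsUserLevelDP {ι α β : Type*} [MeasurableSpace β] (M : (ι → α) → Measure β) (ε δ : ℝ) :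
    Prop :=
  ∀ X X' : ι → α, (∃ i₀, ∀ i, i ≠ i₀ → X i = X' i) →
    ∀ S : Set β, MeasurableSet S → M X S ≤ ENNReal.ofReal (exp ε) * M X' S + ENNReal.ofReal δ

theorem IsUserLevelDP.group_privacy {n : ℕ} {α β : Type*} [MeasurableSpace β]
    {M : (Fin n → α) → Measure β} {ε δ : ℝ} (hM : IsUserLevelDP M ε δ) (hε : 0 ≤ ε)
    (X X' : Fin n → α) {S : Set β} (hS : MeasurableSet S) :
    M X S ≤ ENNReal.ofReal (exp (n * ε)) * (M X' S + n * ENNReal.ofReal δ) := by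
  -- the hybrid dataset `Y k` takes its first `k` users from `X` and the others from `X'`
  let Y : ℕ → Fin n → α := fun k i => if (i : ℕ) < k then X i else X' i
  have hY : ∀ k < n, M (Y (k + 1)) S ≤ ENNReal.ofReal (exp ε) * M (Y k) S + ENNReal.ofReal δ :=
    fun k hk => hM _ _ ⟨⟨k, hk⟩, fun i hi => by
      have : (i : ℕ) ≠ k := fun h => hi (Fin.ext h)
      simp only [Y, Nat.lt_succ_iff_lt_or_eq, this, or_false]⟩ S hS
  have hYn : Y n = X := funext fun i => if_pos i.isLt
  have hY0 : Y 0 = X' := funext fun i => if_neg (Nat.not_lt_zero i)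
  have hexp : ENNReal.ofReal (exp (n * ε)) = ENNReal.ofReal (exp ε) ^ n := by
    rw [← ENNReal.ofReal_pow (exp_nonneg ε), ← exp_nat_mul]
  simpa only [hexp, hYn, hY0] using ENNReal.le_pow_mul_add_of_le_mul_add
    (ENNReal.one_le_ofReal.2 (one_le_exp hε)) hY

theorem eq_zero_of_forall_le_measure_closedBall {E : Type*} [NormedAddCommGroup E]
    [NormedSpace ℝ E] [Nontrivial E] [MeasurableSpace E] [OpensMeasurableSpace E]
    (μ : Measure E) [IsFiniteMeasure μ] (r : ℝ) {c : ℝ≥0∞} (h : ∀ b, c ≤ μ (closedBall b r)) :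
    c = 0 := by
  by_contra hc
  obtain ⟨v, hv⟩ := exists_norm_eq E zero_le_one
  -- balls of radius `r` centred along the line `ℝ v` at spacing `2 |r| + 1` are disjoint
  let B : ℕ → Set E := fun k => closedBall ((k * (2 * |r| + 1)) • v) r
  have hB : Pairwise (Disjoint on B) := by
    intro k l hkl
    refine closedBall_disjoint_closedBall ?_
    have hkl' : (1 : ℝ) ≤ |(k : ℝ) - l| := by
      exact_mod_cast Int.one_le_abs (sub_ne_zero.2 (Int.natCast_inj.not.2 hkl))
    rw [dist_eq_norm, ← sub_smul, norm_smul, hv, mul_one, ← sub_mul, Real.norm_eq_abs, abs_mul,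
      abs_of_pos (by positivity : (0 : ℝ) < 2 * |r| + 1)]
    nlinarith [le_abs_self r, le_mul_of_one_le_left (by positivity : (0 : ℝ) ≤ 2 * |r| + 1) hkl']
  have hfin := Measure.finite_const_le_meas_of_disjoint_iUnion μ (pos_iff_ne_zero.2 hc)
    (fun k => measurableSet_closedBall) hB (measure_ne_top _ _)
  exact Set.infinite_univ (hfin.subset fun k _ => h _)

theorem lt_two_mul_exp_div_six {L : ℝ} (hL : 36 < L) : L < 2 * exp (L / 6) := by
  have h := pow_div_factorial_le_exp (L / 6) (by linarith) 2
  norm_num [Nat.factorial] at h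
  nlinarith

theorem mul_mul_exp_lt_two_thirds {x ε δ : ℝ} (hε : 0 < ε) (hδ : 0 < δ) (hδ₀ : δ ≤ exp (-40))
    (hδε : δ ≤ ε ^ 2) (hx : x ≤ 1 / (3 * ε) * log (1 / δ)) : x * δ * exp (x * ε) < 2 / 3 := by
  obtain ⟨L, rfl⟩ : ∃ L, δ = exp (-L) := ⟨-log δ, by rw [neg_neg, exp_log hδ]⟩
  rw [one_div_mul_eq_div, one_div (exp _), ← exp_neg, neg_neg, log_exp] at hx
  have hL : 40 ≤ L := by simpa using hδ₀
  have hεL : exp (-(L / 2)) ≤ ε := by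
    rwa [← pow_le_pow_iff_left₀ (exp_pos _).le hε.le two_ne_zero, ← exp_nat_mul, Nat.cast_ofNat,
      mul_neg, mul_div_cancel₀ _ two_ne_zero]
  have hxε : x * ε ≤ L / 3 := by
    calc x * ε ≤ L / (3 * ε) * ε := mul_le_mul_of_nonneg_right hx hε.le
      _ = L / 3 := by field_simp
  have hexp : exp (-L) * exp (L / 3) = exp (-(L / 2)) * exp (-(L / 6)) := by
    rw [← exp_add, ← exp_add]; ring_nf
  calc x * exp (-L) * exp (x * ε)
      ≤ L / (3 * ε) * exp (-L) * exp (L / 3) :=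
        mul_le_mul (mul_le_mul_of_nonneg_right hx (exp_pos _).le) (exp_le_exp.2 hxε)
          (exp_pos _).le (by positivity)
    _ ≤ L / (3 * exp (-(L / 2))) * exp (-L) * exp (L / 3) := by gcongr
    _ = L / 3 * exp (-(L / 6)) := by rw [mul_assoc, hexp]; field_simp
    _ < 2 / 3 := by
      rw [exp_neg, ← div_eq_mul_inv, div_lt_iff₀ (exp_pos _)]
      linarith [lt_two_mul_exp_div_six (by linarith : (36 : ℝ) < L)]

/-- Lower bound on the number of users: any `(ε,δ)` user-level differentially private
mechanism over `n` users with `m` samples each in `ℝ^d` that, on every constant dataset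
with common value `b`, outputs a point within `T` of `b` with probability at least `2/3`,
must have `n > (1/(3ε))·log(1/δ)`, provided `δ ≤ ε²` (and `δ` is at most an absolute
constant `δ₀`). -/
theorem stmt_11 :
    ∃ δ₀ : ℝ, 0 < δ₀ ∧
      ∀ (d n m : ℕ), 1 ≤ d → 1 ≤ n → 1 ≤ m →
      ∀ T ε δ : ℝ, 0 < T → 0 < ε → 0 < δ → δ ≤ min (ε ^ 2) δ₀ →
      ∀ M : (Fin n → Fin m → EuclideanSpace ℝ (Fin d)) →
          Measure (EuclideanSpace ℝ (Fin d)),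
        (∀ X, IsProbabilityMeasure (M X)) →
        (∀ X X' : Fin n → Fin m → EuclideanSpace ℝ (Fin d),
          (∃ i₀, ∀ i, i ≠ i₀ → X i = X' i) →
          ∀ S : Set (EuclideanSpace ℝ (Fin d)), MeasurableSet S →
            M X S ≤ ENNReal.ofReal (Real.exp ε) * M X' S + ENNReal.ofReal δ) →
        (∀ b : EuclideanSpace ℝ (Fin d),
          (2 / 3 : ℝ≥0∞) ≤ M (fun _ _ => b) (closedBall b T)) →
        (1 / (3 * ε)) * Real.log (1 / δ) < (n : ℝ) := by
  refine ⟨exp (-40), exp_pos _, fun d n m hd _ _ T ε δ _ hε hδ hδle M hM hdp hacc => ?_⟩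
  by_contra! hn
  have hsmall := mul_mul_exp_lt_two_thirds hε hδ (le_min_iff.1 hδle).2 (le_min_iff.1 hδle).1 hn
  have : Nonempty (Fin d) := ⟨⟨0, hd⟩⟩
  have := hM fun _ _ => 0
  set K := ENNReal.ofReal (exp (n * ε))
  have hball : ∀ b, 2 / 3 / K - n * ENNReal.ofReal δ ≤ M (fun _ _ => 0) (closedBall b T) :=
    fun b => tsub_le_iff_right.2 <| ENNReal.div_le_of_le_mul' <| (hacc b).trans <|
      IsUserLevelDP.group_privacy hdp hε.le _ _ measurableSet_closedBall
  have hlarge := tsub_eq_zero_iff_le.1 (eq_zero_of_forall_le_measure_closedBall _ T hball)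
  refine not_lt_of_ge hlarge ?_
  rw [ENNReal.lt_div_iff_mul_lt (Or.inl (by positivity)) (Or.inl ENNReal.ofReal_ne_top)]
  calc (n : ℝ≥0∞) * ENNReal.ofReal δ * K = ENNReal.ofReal (n * δ * exp (n * ε)) := by
        rw [ENNReal.ofReal_mul (by positivity), ENNReal.ofReal_mul (by positivity),
          ENNReal.ofReal_natCast]
    _ < ENNReal.ofReal (2 / 3) := (ENNReal.ofReal_lt_ofReal_iff (by norm_num)).2 hsmall
    _ = 2 / 3 := by rw [ENNReal.ofReal_div_of_pos (by norm_num)]; simp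
end

section
/- There exist absolute constants C and d₀ such that the following holds for all integers d ≥ d₀. Let 0 < ε, δ, α ≤ 1/3 and let n be an integer with n ≥ C·(1/ε)·log(1/(α·ε·δ)). Let x₁, …, xₙ, x ∈ ℝ^d satisfy #{i : ‖xᵢ − x‖₂ ≤ 1} ≥ 2n/3. For p ∈ ℝ^d let f(p) = #{i ∈ [n] : ‖p − xᵢ‖₂ ≤ √d}, and let V_B denote the Lebesgue volume of a ball of radius √d in ℝ^d. Then (4/δ)·V_B + ∫_{{p : f(p) ≥ 1 and ‖p − x‖₂ > 1 + √d}} e^{ε·min(f(p), 2n/3)} dp ≤ α·[ (4/δ)·V_B + ∫_{{p : f(p) ≥ 1}} e^{ε·min(f(p), 2n/3)} dp ]. -/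
open MeasureTheory Metric Module
open scoped ENNReal Classical

/-!
Write `f(p)` for the number of balls `B(xᵢ, √d)` containing `p` and call `xᵢ` good when
`‖xᵢ - x‖ ≤ 1`. A point farther than `1 + √d` from `x` only lies in balls around bad points, so
`f ≤ n/3` there, while `{f ≥ 1}` is covered by `n` balls of volume `V_B`: the far mass is at most
`n e^{εn/3} V_B`.

On the intersection `T` of the balls around the good points `f ≥ 2n/3`, and `T` has volume at
least `e^{-2a} V_B / 2` for `a = 1 + √(8 log 2n)`, whatever `d` is. Indeed, if `r² ≤ d - a`, the
part of `B(x, r)` outside one good ball `B(y, √d)` lies in a ball of radius `√(r² - (a-1)²/4)`,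
whose share of the volume of `B(x, r)` is at most `e^{-(a-1)²/8} = 1/(2n)`; a union bound over the
good points keeps half of `B(x, r)`, and `B(x, r)` still has volume at least `e^{-2a} V_B`. Hence
the total mass is at least `e^{2εn/3 - 2a} V_B / 2`, and the lower bound on `n` makes
`e^{εn/3 - 2a}` larger than `16 n / (αδ)`.
-/

theorem exp_neg_two_mul_le_one_sub_s12 {x : ℝ} (hx0 : 0 ≤ x) (hx : x ≤ 1 / 2) :
    Real.exp (-(2 * x)) ≤ 1 - x := by
  have hmul : Real.exp (-(2 * x)) * Real.exp (2 * x) = 1 := by rw [← Real.exp_add]; simp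
  nlinarith [Real.add_one_le_exp (2 * x), Real.exp_pos (-(2 * x))]

theorem sqrt_sub_pow_le {r q : ℝ} {d : ℕ} (hr : 0 < r) (hq0 : 0 ≤ q)
    (hrd : r ^ 2 ≤ d) : Real.sqrt (r ^ 2 - q) ^ d ≤ Real.exp (-(q / 2)) * r ^ d := by
  have hr2 : 0 < r ^ 2 := by positivity
  have hsqrt : Real.sqrt (r ^ 2 - q) ≤ r * Real.exp (-(q / r ^ 2) / 2) := by
    rw [Real.sqrt_le_iff, mul_pow, ← Real.exp_nat_mul]
    refine ⟨by positivity, ?_⟩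
    have := mul_le_mul_of_nonneg_left (Real.one_sub_le_exp_neg (q / r ^ 2)) hr2.le
    rw [show ((2 : ℕ) : ℝ) * (-(q / r ^ 2) / 2) = -(q / r ^ 2) by push_cast; ring]
    rwa [mul_sub, mul_one, mul_div_cancel₀ _ hr2.ne'] at this
  calc Real.sqrt (r ^ 2 - q) ^ d ≤ (r * Real.exp (-(q / r ^ 2) / 2)) ^ d := by gcongr
    _ = Real.exp (-(q / r ^ 2 * d / 2)) * r ^ d := by
      rw [mul_pow, ← Real.exp_nat_mul]; ring_nf
    _ ≤ Real.exp (-(q / 2)) * r ^ d := by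
      gcongr
      rw [div_mul_eq_mul_div, le_div_iff₀ hr2]
      exact mul_le_mul_of_nonneg_left hrd hq0

theorem sqrt_eight_mul_le {y : ℝ} (hy : 0 ≤ y) : Real.sqrt (8 * y) ≤ 4 + y / 2 := by
  rw [Real.sqrt_le_left (by positivity)]
  nlinarith [sq_nonneg (y - 8)]

theorem log_sample_size_bound {ε δ α : ℝ} {n : ℕ} (hε : 0 < ε) (hε3 : ε ≤ 1 / 3)
    (hδ : 0 < δ) (hδ3 : δ ≤ 1 / 3) (hα : 0 < α) (hα3 : α ≤ 1 / 3)
    (hn : 100 * (1 / ε) * Real.log (1 / (α * ε * δ)) ≤ n) :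
    1 ≤ (n : ℝ) ∧ Real.log 16 + Real.log n + Real.log (1 / α) + Real.log (1 / δ) +
      2 * (1 + Real.sqrt (8 * Real.log (2 * n))) ≤ ε * n / 3 := by
  set L := Real.log (1 / (α * ε * δ))
  have hαε : α * ε ≤ 1 / 9 := by nlinarith
  have hεδ : ε * δ ≤ 1 / 9 := by nlinarith
  have hαδ : α * δ ≤ 1 / 9 := by nlinarith
  have hlog_le {t : ℝ} (ht : 0 < t) (h : α * ε * δ ≤ t) : Real.log (1 / t) ≤ L :=
    Real.log_le_log (by positivity) (one_div_le_one_div_of_le (by positivity) h)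
  have hαL : Real.log (1 / α) ≤ L := hlog_le hα (by nlinarith [mul_le_mul_of_nonneg_left hεδ hα.le])
  have hδL : Real.log (1 / δ) ≤ L := hlog_le hδ (by nlinarith)
  have hεL : Real.log (1 / ε) ≤ L := hlog_le hε (by nlinarith [mul_le_mul_of_nonneg_left hαδ hε.le])
  have hlog2 := Real.log_two_lt_d9
  have hlog2' := Real.log_two_gt_d9
  have hlog16 : Real.log 16 = 4 * Real.log 2 := by
    rw [show (16 : ℝ) = 2 ^ 4 by norm_num, Real.log_pow]; norm_num
  have hL : Real.log 16 ≤ L := by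
    simpa using hlog_le (t := 1 / 16) (by norm_num) (by nlinarith)
  have hεn : 100 * L ≤ ε * n := by
    have := mul_le_mul_of_nonneg_left hn hε.le
    rwa [← mul_assoc, ← mul_assoc, mul_comm ε, mul_assoc 100, mul_one_div_cancel hε.ne',
      mul_one] at this
  have hn1 : (1 : ℝ) ≤ n := by nlinarith
  have hlogn : Real.log n ≤ ε * n / 12 + L + Real.log 16 - 1 := by
    have hsplit : Real.log n = Real.log (ε * n / 12) + Real.log 12 + Real.log (1 / ε) := by
      rw [← Real.log_mul (by positivity) (by norm_num), ← Real.log_mul (by positivity)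
        (by positivity)]
      congr 1; field_simp
    have := Real.log_le_sub_one_of_pos (by positivity : 0 < ε * n / 12)
    have := Real.log_le_log (by norm_num : (0 : ℝ) < 12) (by norm_num : (12 : ℝ) ≤ 16)
    linarith
  have hlog2n : Real.log (2 * n) = Real.log 2 + Real.log n :=
    Real.log_mul two_ne_zero (by positivity)
  have hsqrt := sqrt_eight_mul_le (Real.log_nonneg (by linarith : (1 : ℝ) ≤ 2 * n))
  exact ⟨hn1, by linarith⟩

theorem sample_size_bound {ε δ α : ℝ} {n : ℕ} (hε : 0 < ε) (hε3 : ε ≤ 1 / 3)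
    (hδ : 0 < δ) (hδ3 : δ ≤ 1 / 3) (hα : 0 < α) (hα3 : α ≤ 1 / 3)
    (hn : 100 * (1 / ε) * Real.log (1 / (α * ε * δ)) ≤ n) :
    2 * (4 / δ + n * Real.exp (ε * (n / 3))) ≤
      α * (Real.exp (ε * (2 * n / 3)) *
        Real.exp (-(2 * (1 + Real.sqrt (8 * Real.log (2 * n)))))) := by
  obtain ⟨hn1, hlog⟩ := log_sample_size_bound hε hε3 hδ hδ3 hα hα3 hn
  set a := 1 + Real.sqrt (8 * Real.log (2 * n))
  have hmargin : 16 * n * (1 / α) * (1 / δ) ≤ Real.exp (ε * n / 3 - 2 * a) := by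
    rw [← Real.log_le_iff_le_exp (by positivity), Real.log_mul (by positivity) (by positivity),
      Real.log_mul (by positivity) (by positivity), Real.log_mul (by positivity) (by positivity)]
    linarith
  have hsplit : Real.exp (ε * (2 * n / 3)) * Real.exp (-(2 * a)) =
      Real.exp (ε * (n / 3)) * Real.exp (ε * n / 3 - 2 * a) := by
    rw [← Real.exp_add, ← Real.exp_add]; ring_nf
  have hE : 1 ≤ Real.exp (ε * (n / 3)) := Real.one_le_exp (by positivity)
  have hαm : 16 * n * (1 / δ) ≤ α * Real.exp (ε * n / 3 - 2 * a) := by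
    have := mul_le_mul_of_nonneg_left hmargin hα.le
    rwa [show α * (16 * n * (1 / α) * (1 / δ)) = 16 * n * (1 / δ) by field_simp] at this
  have h3δ : 3 ≤ 1 / δ := by rw [le_div_iff₀ hδ]; linarith
  have hnE : 1 ≤ n * Real.exp (ε * (n / 3)) := one_le_mul_of_one_le_of_one_le hn1 hE
  rw [hsplit, mul_left_comm, div_eq_mul_one_div 4 δ]
  nlinarith [mul_le_mul_of_nonneg_left hαm (by positivity : 0 ≤ Real.exp (ε * (n / 3))),
    mul_le_mul_of_nonneg_left h3δ (by positivity : 0 ≤ n * Real.exp (ε * (n / 3))),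
    mul_le_mul_of_nonneg_right hnE (by positivity : 0 ≤ 1 / δ)]

theorem measure_le_two_mul_measure_inter_biInter {α ι : Type*} [MeasurableSpace α]
    (μ : Measure α) {A : Set α} (hA : μ A ≠ ∞) {K : ι → Set α} {s : Finset ι} {η : ℝ≥0∞}
    (hK : ∀ i ∈ s, μ (A \ K i) ≤ η * μ A) (hη : 2 * s.card * η ≤ 1) :
    μ A ≤ 2 * μ (A ∩ ⋂ i ∈ s, K i) := by
  have hdiff : μ (A \ ⋂ i ∈ s, K i) ≤ s.card * η * μ A := by
    calc μ (A \ ⋂ i ∈ s, K i) = μ (⋃ i ∈ s, A \ K i) := by simp only [Set.sdiff_iInter]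
      _ ≤ ∑ i ∈ s, μ (A \ K i) := measure_biUnion_finset_le _ _
      _ ≤ ∑ _i ∈ s, η * μ A := Finset.sum_le_sum hK
      _ = s.card * η * μ A := by rw [Finset.sum_const, nsmul_eq_mul, mul_assoc]
  refine ENNReal.le_of_add_le_add_right hA ?_
  calc μ A + μ A ≤ 2 * μ (A ∩ ⋂ i ∈ s, K i) + 2 * s.card * η * μ A := by
        rw [← two_mul, mul_assoc 2 (s.card : ℝ≥0∞), mul_assoc 2, ← mul_add]
        gcongr
        exact (measure_le_inter_add_sdiff μ A _).trans (by gcongr)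
    _ ≤ 2 * μ (A ∩ ⋂ i ∈ s, K i) + μ A := by
        gcongr
        exact (mul_le_mul_left hη _).trans (one_mul _).le

theorem closedBall_sub_one_subset_biInter {E ι : Type*} [PseudoMetricSpace E] {ys : ι → E}
    {s : Finset ι} {x : E} (hys : ∀ i ∈ s, dist (ys i) x ≤ 1) (R : ℝ) :
    closedBall x (R - 1) ⊆ ⋂ i ∈ s, closedBall (ys i) R := by
  intro p hp
  simp only [Set.mem_iInter, mem_closedBall] at hp ⊢
  intro i hi
  linarith [dist_triangle_right p (ys i) x, hys i hi]

section InnerProductSpace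

variable {E : Type*} [NormedAddCommGroup E] [InnerProductSpace ℝ E]

theorem closedBall_diff_closedBall_subset {x y : E} {r R b : ℝ} (hR : 0 ≤ R)
    (hxy : dist x y ≤ 1) (hb : 0 ≤ b) (hr : r ^ 2 + 1 + b ≤ R ^ 2) :
    closedBall x r \ closedBall y R ⊆
      closedBall (x + (b / (2 * dist x y ^ 2)) • (x - y)) (Real.sqrt (r ^ 2 - b ^ 2 / 4)) := by
  rintro p ⟨hpx, hpy⟩
  rw [mem_closedBall, dist_eq_norm] at hpx
  rw [mem_closedBall, not_le, dist_eq_norm] at hpy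
  rw [mem_closedBall, dist_eq_norm, ← Real.sqrt_sq (norm_nonneg _)]
  apply Real.sqrt_le_sqrt
  have hpx2 : ‖p - x‖ ^ 2 ≤ r ^ 2 := pow_le_pow_left₀ (norm_nonneg _) hpx 2
  have hpy2 : R ^ 2 < ‖p - y‖ ^ 2 := by gcongr
  set t := dist x y with htdef
  have ht : ‖x - y‖ = t := (dist_eq_norm x y).symm
  have hsplit : ‖p - y‖ ^ 2 = ‖p - x‖ ^ 2 + 2 * inner ℝ (p - x) (x - y) + t ^ 2 := by
    rw [← ht, ← norm_add_sq_real, sub_add_sub_cancel]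
  have ht0 : 0 < t := by
    refine (dist_nonneg).lt_of_ne fun ht0 => ?_
    have hxy0 : x - y = 0 := norm_eq_zero.1 (ht.trans ht0.symm)
    rw [hxy0, inner_zero_right] at hsplit
    nlinarith
  -- Points outside `B(y, R)` satisfy `2⟪p - x, x - y⟫ > b + 1 - t²`; moving the centre by
  -- `c • (x - y)` turns this into a saving of at least `b²/4` in the squared distance.
  set c := b / (2 * t ^ 2) with hc
  have hinner : b + 1 - t ^ 2 < 2 * inner ℝ (p - x) (x - y) := by nlinarith
  have hexpand : ‖p - (x + c • (x - y))‖ ^ 2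
      = ‖p - x‖ ^ 2 - 2 * (c * inner ℝ (p - x) (x - y)) + c ^ 2 * t ^ 2 := by
    rw [show p - (x + c • (x - y)) = (p - x) - c • (x - y) by abel, norm_sub_sq_real,
      real_inner_smul_right, norm_smul, mul_pow, Real.norm_eq_abs, sq_abs, ht]
  have hgain : b ^ 2 / 4 ≤ c * (b + 1 - t ^ 2) - c ^ 2 * t ^ 2 := by
    have hid : c * (b + 1 - t ^ 2) - c ^ 2 * t ^ 2 - b ^ 2 / 4
        = b * (b + 2) * (1 - t ^ 2) / (4 * t ^ 2) := by
      rw [hc]; field_simp; ring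
    have : t ^ 2 ≤ 1 := by nlinarith
    have : 0 ≤ b * (b + 2) * (1 - t ^ 2) / (4 * t ^ 2) := by
      apply div_nonneg _ (by positivity)
      apply mul_nonneg (by positivity) (by linarith)
    linarith
  rw [hexpand]
  nlinarith [mul_le_mul_of_nonneg_left hinner.le (by positivity : 0 ≤ c)]

variable [FiniteDimensional ℝ E]
  [MeasurableSpace E] [BorelSpace E] (μ : Measure E) [μ.IsAddHaarMeasure]

theorem exp_mul_measure_closedBall_le (x : E) {R s : ℝ} (hR : 0 ≤ R) (hs0 : 0 ≤ s)
    (hs : s ≤ 1 / 2) :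
    ENNReal.ofReal (Real.exp (-(2 * s * finrank ℝ E))) * μ (closedBall 0 R) ≤
      μ (closedBall x (R * (1 - s))) := by
  rw [mul_comm R, Measure.addHaar_closedBall_mul μ x (by linarith) hR]
  gcongr
  rw [mul_comm _ (finrank ℝ E : ℝ), neg_mul_eq_mul_neg, Real.exp_nat_mul]
  exact pow_le_pow_left₀ (Real.exp_pos _).le (exp_neg_two_mul_le_one_sub_s12 hs0 hs) _

theorem measure_closedBall_diff_closedBall_le {x y : E} {r R b : ℝ} (hR : 0 ≤ R)
    (hxy : dist x y ≤ 1) (hb : 0 ≤ b) (hr : r ^ 2 + 1 + b ≤ R ^ 2) (hr0 : 0 < r)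
    (hrd : r ^ 2 ≤ finrank ℝ E) :
    μ (closedBall x r \ closedBall y R) ≤
      ENNReal.ofReal (Real.exp (-(b ^ 2 / 8))) * μ (closedBall x r) := by
  calc μ (closedBall x r \ closedBall y R)
      ≤ μ (closedBall _ (Real.sqrt (r ^ 2 - b ^ 2 / 4))) :=
        measure_mono (closedBall_diff_closedBall_subset hR hxy hb hr)
    _ = ENNReal.ofReal (Real.sqrt (r ^ 2 - b ^ 2 / 4) ^ finrank ℝ E) * μ (closedBall 0 1) :=
        Measure.addHaar_closedBall' μ _ (Real.sqrt_nonneg _)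
    _ ≤ ENNReal.ofReal (Real.exp (-(b ^ 2 / 8)) * r ^ finrank ℝ E) * μ (closedBall 0 1) := by
        gcongr
        convert sqrt_sub_pow_le (q := b ^ 2 / 4) hr0 (by positivity) hrd using 3
        ring
    _ = ENNReal.ofReal (Real.exp (-(b ^ 2 / 8))) * μ (closedBall x r) := by
        rw [Measure.addHaar_closedBall' μ _ hr0.le, ENNReal.ofReal_mul (Real.exp_pos _).le,
          mul_assoc]

theorem measure_closedBall_le_two_mul_measure_inter_biInter {ι : Type*} {ys : ι → E}
    {s : Finset ι} {x : E} (hys : ∀ i ∈ s, dist (ys i) x ≤ 1) {r R b : ℝ} (hR : 0 ≤ R)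
    (hb : 0 ≤ b) (hr : r ^ 2 + 1 + b ≤ R ^ 2) (hr0 : 0 < r) (hrd : r ^ 2 ≤ finrank ℝ E)
    (hs : 2 * s.card * Real.exp (-(b ^ 2 / 8)) ≤ 1) :
    μ (closedBall x r) ≤ 2 * μ (closedBall x r ∩ ⋂ i ∈ s, closedBall (ys i) R) := by
  have hη : 2 * (s.card : ℝ≥0∞) * ENNReal.ofReal (Real.exp (-(b ^ 2 / 8))) ≤ 1 := by
    rw [← ENNReal.ofReal_natCast, ← ENNReal.ofReal_ofNat, ← ENNReal.ofReal_mul (by norm_num),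
      ← ENNReal.ofReal_mul (by positivity)]
    exact ENNReal.ofReal_le_one.2 hs
  refine measure_le_two_mul_measure_inter_biInter μ measure_closedBall_lt_top.ne
    (fun i hi => ?_) hη
  exact measure_closedBall_diff_closedBall_le μ hR (dist_comm (ys i) x ▸ hys i hi) hb hr hr0 hrd

theorem exp_mul_measure_closedBall_le_two_mul_measure_biInter (hd : 4 ≤ finrank ℝ E)
    {ι : Type*} {ys : ι → E} {s : Finset ι} {x : E} (hys : ∀ i ∈ s, dist (ys i) x ≤ 1)
    {b : ℝ} (hb : 0 ≤ b) (hs : 2 * s.card * Real.exp (-(b ^ 2 / 8)) ≤ 1) :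
    ENNReal.ofReal (Real.exp (-(2 * (1 + b)))) * μ (closedBall 0 (Real.sqrt (finrank ℝ E))) ≤
      2 * μ (⋂ i ∈ s, closedBall (ys i) (Real.sqrt (finrank ℝ E))) := by
  set d : ℝ := (finrank ℝ E : ℝ)
  have hd4 : 4 ≤ d := by simp only [d]; exact_mod_cast hd
  have hsd : Real.sqrt d ^ 2 = d := Real.sq_sqrt (by linarith)
  have hsd2 : 2 ≤ Real.sqrt d := Real.le_sqrt_of_sq_le (by linarith)
  by_cases hbd : 1 + b ≤ Real.sqrt d
  · set u := (1 + b) / d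
    have hud : u * d = 1 + b := div_mul_cancel₀ _ (by positivity)
    have hu0 : 0 ≤ u := by positivity
    have hu : u ≤ 1 / 2 := by rw [div_le_iff₀ (by positivity)]; nlinarith
    have hr2 : (Real.sqrt d * (1 - u)) ^ 2 = d * (1 - u) ^ 2 := by rw [mul_pow, hsd]
    have hu1 : 0 ≤ u * (1 - u) := mul_nonneg hu0 (by linarith)
    calc ENNReal.ofReal (Real.exp (-(2 * (1 + b)))) * μ (closedBall 0 (Real.sqrt d))
        = ENNReal.ofReal (Real.exp (-(2 * u * d))) * μ (closedBall 0 (Real.sqrt d)) := by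
          rw [mul_assoc, hud]
      _ ≤ μ (closedBall x (Real.sqrt d * (1 - u))) :=
          exp_mul_measure_closedBall_le μ x (Real.sqrt_nonneg d) hu0 hu
      _ ≤ 2 * μ (closedBall x (Real.sqrt d * (1 - u)) ∩
            ⋂ i ∈ s, closedBall (ys i) (Real.sqrt d)) :=
          measure_closedBall_le_two_mul_measure_inter_biInter μ hys (Real.sqrt_nonneg d) hb
            (by nlinarith) (mul_pos (by linarith) (by linarith)) (by nlinarith) hs
      _ ≤ 2 * μ (⋂ i ∈ s, closedBall (ys i) (Real.sqrt d)) := by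
          gcongr; exact Set.inter_subset_right
  · -- Here `B(x, √d - 1)` lies in every good ball and `e^{-2√d} ≥ e^{-2a}` is already enough.
    have hsd0 : 0 < Real.sqrt d := by linarith
    have hradius : Real.sqrt d * (1 - 1 / Real.sqrt d) = Real.sqrt d - 1 := by
      rw [mul_one_sub, mul_one_div_cancel hsd0.ne']
    have hexponent : 2 * (1 / Real.sqrt d) * d = 2 * Real.sqrt d := by
      field_simp; nlinarith
    calc ENNReal.ofReal (Real.exp (-(2 * (1 + b)))) * μ (closedBall 0 (Real.sqrt d))
        ≤ ENNReal.ofReal (Real.exp (-(2 * (1 / Real.sqrt d) * d))) *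
            μ (closedBall 0 (Real.sqrt d)) := by
          gcongr ENNReal.ofReal (Real.exp ?_) * _
          linarith
      _ ≤ μ (closedBall x (Real.sqrt d * (1 - 1 / Real.sqrt d))) :=
          exp_mul_measure_closedBall_le μ x hsd0.le (by positivity)
            (by rw [div_le_div_iff₀ hsd0 two_pos]; linarith)
      _ ≤ μ (⋂ i ∈ s, closedBall (ys i) (Real.sqrt d)) := by
          rw [hradius]; exact measure_mono (closedBall_sub_one_subset_biInter hys _)
      _ ≤ 2 * μ (⋂ i ∈ s, closedBall (ys i) (Real.sqrt d)) := le_mul_of_one_le_left' one_le_two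

end InnerProductSpace

section BallCount

variable {E ι : Type*} [PseudoMetricSpace E] [Fintype ι]

noncomputable def ballCount (xs : ι → E) (R : ℝ) (p : E) : ℕ :=
  (Finset.univ.filter fun i => dist p (xs i) ≤ R).card

theorem ballCount_le_card_filter_not {xs : ι → E} {R r : ℝ} {x p : E} (hp : r + R < dist p x) :
    ballCount xs R p ≤ (Finset.univ.filter fun i => ¬dist (xs i) x ≤ r).card := by
  refine Finset.card_le_card fun i hi => ?_
  simp only [Finset.mem_filter, Finset.mem_univ, true_and] at hi ⊢
  intro hix
  linarith [dist_triangle p (xs i) x]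

theorem card_le_ballCount {xs : ι → E} {R : ℝ} {s : Finset ι} {p : E}
    (hp : p ∈ ⋂ i ∈ s, closedBall (xs i) R) : s.card ≤ ballCount xs R p := by
  refine Finset.card_le_card fun i hi => ?_
  simp only [Set.mem_iInter, mem_closedBall] at hp
  simpa using hp i hi

theorem setOf_one_le_ballCount_subset (xs : ι → E) (R : ℝ) :
    {p | 1 ≤ ballCount xs R p} ⊆ ⋃ i, closedBall (xs i) R := by
  intro p hp
  obtain ⟨i, hi⟩ := Finset.card_pos.1 hp
  simp only [Finset.mem_filter, Finset.mem_univ, true_and] at hi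
  exact Set.mem_iUnion.2 ⟨i, hi⟩

theorem exp_mul_measure_biInter_le_setLIntegral [MeasurableSpace E] [OpensMeasurableSpace E]
    (μ : Measure E) (xs : ι → E) (s : Finset ι) {R ε m : ℝ} (hm : 0 < m) (hms : m ≤ s.card) :
    ENNReal.ofReal (Real.exp (ε * m)) * μ (⋂ i ∈ s, closedBall (xs i) R) ≤
      ∫⁻ p in {p | 1 ≤ ballCount xs R p},
        ENNReal.ofReal (Real.exp (ε * min (ballCount xs R p : ℝ) m)) ∂μ := by
  have hT : MeasurableSet (⋂ i ∈ s, closedBall (xs i) R) :=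
    Finset.measurableSet_biInter s fun i _ => measurableSet_closedBall
  have hmin : ∀ p ∈ ⋂ i ∈ s, closedBall (xs i) R, min (ballCount xs R p : ℝ) m = m :=
    fun p hp => min_eq_right (hms.trans (Nat.cast_le.2 (card_le_ballCount hp)))
  rw [← setLIntegral_const]
  calc ∫⁻ _ in ⋂ i ∈ s, closedBall (xs i) R, ENNReal.ofReal (Real.exp (ε * m)) ∂μ
      = ∫⁻ p in ⋂ i ∈ s, closedBall (xs i) R,
          ENNReal.ofReal (Real.exp (ε * min (ballCount xs R p : ℝ) m)) ∂μ :=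
        setLIntegral_congr_fun hT fun p hp => by rw [hmin p hp]
    _ ≤ _ := by
        refine lintegral_mono_set fun p hp => ?_
        exact Nat.cast_pos.1 (hm.trans_le (hms.trans (Nat.cast_le.2 (card_le_ballCount hp))))

end BallCount

theorem setLIntegral_exp_min_ballCount_far_le {E ι : Type*} [NormedAddCommGroup E]
    [MeasurableSpace E] [BorelSpace E] [Fintype ι] (μ : Measure E) [μ.IsAddHaarMeasure]
    (xs : ι → E) (x : E) {r R ε c m : ℝ} (hε : 0 ≤ ε)
    (hc : (Fintype.card ι : ℝ) - (Finset.univ.filter fun i => dist (xs i) x ≤ r).card ≤ c) :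
    ∫⁻ p in {p | 1 ≤ ballCount xs R p ∧ r + R < dist p x},
        ENNReal.ofReal (Real.exp (ε * min (ballCount xs R p : ℝ) m)) ∂μ ≤
      ENNReal.ofReal (Fintype.card ι * Real.exp (ε * c)) * μ (closedBall 0 R) := by
  have hbad : ((Finset.univ.filter fun i => ¬dist (xs i) x ≤ r).card : ℝ) ≤ c := by
    have := Finset.card_filter_add_card_filter_not (s := Finset.univ)
      (fun i => dist (xs i) x ≤ r)
    rw [Finset.card_univ] at this
    have := congrArg (Nat.cast : ℕ → ℝ) this
    push_cast at this
    linarith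
  calc ∫⁻ p in {p | 1 ≤ ballCount xs R p ∧ r + R < dist p x},
        ENNReal.ofReal (Real.exp (ε * min (ballCount xs R p : ℝ) m)) ∂μ
      ≤ ∫⁻ _ in {p | 1 ≤ ballCount xs R p ∧ r + R < dist p x},
          ENNReal.ofReal (Real.exp (ε * c)) ∂μ := by
        refine setLIntegral_mono measurable_const fun p hp => ?_
        gcongr
        exact (min_le_left _ _).trans
          ((Nat.cast_le.2 (ballCount_le_card_filter_not hp.2)).trans hbad)
    _ ≤ ENNReal.ofReal (Real.exp (ε * c)) * μ (⋃ i, closedBall (xs i) R) := by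
        rw [setLIntegral_const]
        gcongr
        exact fun p hp => setOf_one_le_ballCount_subset xs R hp.1
    _ ≤ ENNReal.ofReal (Real.exp (ε * c)) * ∑ i, μ (closedBall (xs i) R) := by
        gcongr
        exact measure_iUnion_fintype_le μ _
    _ = ENNReal.ofReal (Fintype.card ι * Real.exp (ε * c)) * μ (closedBall 0 R) := by
        simp only [Measure.addHaar_closedBall_center, Finset.sum_const, Finset.card_univ,
          nsmul_eq_mul]
        rw [ENNReal.ofReal_mul (by positivity), ENNReal.ofReal_natCast]
        ring

theorem add_le_ofReal_mul_add {B T I F : ℝ≥0∞} {g c w v α : ℝ} (hg : 0 ≤ g) (hc : 0 ≤ c)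
    (hw : 0 ≤ w) (hα : 0 ≤ α) (hF : F ≤ ENNReal.ofReal c * B) (hT : ENNReal.ofReal v * B ≤ 2 * T)
    (hI : ENNReal.ofReal w * T ≤ I) (h : 2 * (g + c) ≤ α * (w * v)) :
    ENNReal.ofReal g * B + F ≤ ENNReal.ofReal α * (ENNReal.ofReal g * B + I) := by
  have hdouble : 2 * (ENNReal.ofReal g * B + F) ≤ 2 * (ENNReal.ofReal α * I) :=
    calc 2 * (ENNReal.ofReal g * B + F) ≤ ENNReal.ofReal (2 * (g + c)) * B := by
          rw [ENNReal.ofReal_mul zero_le_two, ENNReal.ofReal_add hg hc, ENNReal.ofReal_ofNat,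
            mul_assoc, add_mul]
          gcongr
      _ ≤ ENNReal.ofReal (α * (w * v)) * B := by gcongr
      _ = ENNReal.ofReal α * ENNReal.ofReal w * (ENNReal.ofReal v * B) := by
          rw [ENNReal.ofReal_mul hα, ENNReal.ofReal_mul hw]; ring
      _ ≤ ENNReal.ofReal α * ENNReal.ofReal w * (2 * T) := by gcongr
      _ ≤ 2 * (ENNReal.ofReal α * I) := by
          rw [mul_left_comm, mul_assoc]
          gcongr
  calc ENNReal.ofReal g * B + F ≤ ENNReal.ofReal α * I :=
        (ENNReal.mul_le_mul_iff_right two_ne_zero ENNReal.ofNat_ne_top).1 hdouble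
    _ ≤ ENNReal.ofReal α * (ENNReal.ofReal g * B + I) := by gcongr; exact le_add_self

/-- Accuracy of the exponential-mechanism-style distribution: if at least `2n/3` of the
points `xᵢ` lie within distance `1` of `x`, then (with `f(p)` counting the balls of radius
`√d` around the `xᵢ` that contain `p`, and `V_B` the volume of a ball of radius `√d`),
the garbage-bucket mass `(4/δ)·V_B` plus the mass of points farther than `1 + √d` from `x`
is at most an `α` fraction of the total mass. -/
theorem stmt_12 :
    ∃ C : ℝ, ∃ d₀ : ℕ, 0 < C ∧
      ∀ d : ℕ, d₀ ≤ d →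
      ∀ ε δ α : ℝ, 0 < ε → ε ≤ 1/3 → 0 < δ → δ ≤ 1/3 → 0 < α → α ≤ 1/3 →
      ∀ n : ℕ, C * (1/ε) * Real.log (1 / (α * ε * δ)) ≤ (n : ℝ) →
      ∀ (xs : Fin n → EuclideanSpace ℝ (Fin d)) (x : EuclideanSpace ℝ (Fin d)),
        (2 * (n : ℝ) / 3) ≤
          ((Finset.univ.filter (fun i => dist (xs i) x ≤ 1)).card : ℝ) →
        ENNReal.ofReal (4 / δ) *
            volume (closedBall (0 : EuclideanSpace ℝ (Fin d)) (Real.sqrt d)) +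
          ∫⁻ p in {p : EuclideanSpace ℝ (Fin d) |
              1 ≤ (Finset.univ.filter (fun i => dist p (xs i) ≤ Real.sqrt d)).card ∧
              1 + Real.sqrt d < dist p x},
            ENNReal.ofReal (Real.exp (ε * min
              (((Finset.univ.filter (fun i => dist p (xs i) ≤ Real.sqrt d)).card : ℝ))
              (2 * (n : ℝ) / 3))) ≤
        ENNReal.ofReal α *
          (ENNReal.ofReal (4 / δ) *
              volume (closedBall (0 : EuclideanSpace ℝ (Fin d)) (Real.sqrt d)) +
            ∫⁻ p in {p : EuclideanSpace ℝ (Fin d) |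
                1 ≤ (Finset.univ.filter (fun i => dist p (xs i) ≤ Real.sqrt d)).card},
              ENNReal.ofReal (Real.exp (ε * min
                (((Finset.univ.filter (fun i => dist p (xs i) ≤ Real.sqrt d)).card : ℝ))
                (2 * (n : ℝ) / 3)))) := by
  refine ⟨100, 4, by norm_num, ?_⟩
  intro d hd ε δ α hε hε3 hδ hδ3 hα hα3 n hn xs x hgood
  have hn1 := (log_sample_size_bound hε hε3 hδ hδ3 hα hα3 hn).1
  set good := Finset.univ.filter fun i => dist (xs i) x ≤ 1
  set b := Real.sqrt (8 * Real.log (2 * n))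
  have hcover : 2 * (good.card : ℝ) * Real.exp (-(b ^ 2 / 8)) ≤ 1 := by
    have hgood_le : (good.card : ℝ) ≤ n := by
      exact_mod_cast (Finset.card_le_univ good).trans_eq (Fintype.card_fin n)
    rw [Real.sq_sqrt (by have := Real.log_nonneg (by linarith : (1 : ℝ) ≤ 2 * n); positivity),
      mul_div_cancel_left₀ _ (by norm_num), Real.exp_neg, Real.exp_log (by positivity),
      ← div_eq_mul_inv, div_le_one (by positivity)]
    linarith
  have hfar := setLIntegral_exp_min_ballCount_far_le volume xs x (r := 1) (R := Real.sqrt d)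
    (m := 2 * n / 3) (c := n / 3) hε.le (by rw [Fintype.card_fin]; linarith)
  have hT := exp_mul_measure_closedBall_le_two_mul_measure_biInter volume
    (by simpa using hd) (fun i hi => (Finset.mem_filter.1 hi).2) (Real.sqrt_nonneg _) hcover
  have hnear := exp_mul_measure_biInter_le_setLIntegral volume xs good (R := Real.sqrt d)
    (ε := ε) (by positivity) hgood
  rw [Fintype.card_fin] at hfar
  rw [finrank_euclideanSpace_fin] at hT
  exact add_le_ofReal_mul_add (by positivity) (by positivity) (by positivity) hα.le hfar hT hnear
    (sample_size_bound hε hε3 hδ hδ3 hα hα3 hn)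
end
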